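/- arXiv:1503.07508 — 5 statements merged into one kernel-verified Lean document; each statement's English description precedes it below -/
import Mathlib

section
/- Let β̃ minimize the total variation problem β ↦ (1/2)‖β − z‖² + (λ₂/L) Σ_{(i,j)∈E} w_{ij}|β_i − β_j|. Then the vector β* with coordinates β*_k = max(sign(β̃_k)·max(|β̃_k| − λ₁/L, 0), 0) is the unique minimizer of the nonnegatively constrained problem β ↦ (1/2)‖β − z‖² + (λ₁/L)Σ_k |β_k| + (λ₂/L)Σ_{(i,j)∈E} w_{ij}|β_i − β_j| subject to β ≥ 0. -/
lemma aux_T_eq (x c : ℝ) (hc : 0 ≤ c) :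
    max (Real.sign x * max (|x| - c) 0) 0 = max (x - c) 0 := by
  rcases lt_trichotomy x 0 with h | h | h
  · rw [Real.sign_of_neg h, abs_of_neg h]
    have h2 : (0:ℝ) ≤ max (-x - c) 0 := le_max_right _ _
    rw [max_eq_right (show x - c ≤ 0 by linarith), max_eq_right (by nlinarith)]
  · subst h
    rw [Real.sign_zero, zero_mul, max_self, eq_comm]
    exact max_eq_right (by linarith)
  · rw [Real.sign_of_pos h, abs_of_pos h, one_mul]
    exact max_eq_left (le_max_right _ _)

lemma aux_prox (x b c : ℝ) (hc : 0 ≤ c) (hb : 0 ≤ b) :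
    0 ≤ (max (x - c) 0 - x) * (b - max (x - c) 0) + c * (b - max (x - c) 0) := by
  rcases le_total (x - c) 0 with h | h
  · rw [max_eq_right h]
    nlinarith
  · rw [max_eq_left h]
    nlinarith

lemma aux_edge (p q c : ℝ) :
    |max (p - c) 0 - max (q - c) 0| + |(p - q) - (max (p - c) 0 - max (q - c) 0)|
      = |p - q| := by
  rcases le_total (p - c) 0 with hp | hp <;> rcases le_total (q - c) 0 with hq | hq
  · rw [max_eq_right hp, max_eq_right hq]
    simp
  · rw [max_eq_right hp, max_eq_left hq]
    rw [abs_of_nonpos (by linarith), abs_of_nonpos (by linarith),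
      abs_of_nonpos (by linarith)]
    ring
  · rw [max_eq_left hp, max_eq_right hq]
    rw [abs_of_nonneg (by linarith), abs_of_nonneg (by linarith),
      abs_of_nonneg (by linarith)]
    ring
  · rw [max_eq_left hp, max_eq_left hq]
    have : (p - c) - (q - c) = p - q := by ring
    rw [this]
    simp

/-- Variational inequality for the minimizer of the TV problem. -/
lemma aux_vi {d : ℕ} (z βt : Fin d → ℝ) (c2 : ℝ) (hc2 : 0 ≤ c2)
    (E : Finset (Fin d × Fin d)) (w : Fin d × Fin d → ℝ) (hw : ∀ e ∈ E, 0 ≤ w e)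
    (hmin : ∀ β : Fin d → ℝ,
      (1/2) * ∑ k, (βt k - z k)^2 + c2 * ∑ e ∈ E, w e * |βt e.1 - βt e.2|
      ≤ (1/2) * ∑ k, (β k - z k)^2 + c2 * ∑ e ∈ E, w e * |β e.1 - β e.2|)
    (v : Fin d → ℝ) :
    0 ≤ ∑ k, (βt k - z k) * (v k - βt k)
      + c2 * (∑ e ∈ E, w e * |v e.1 - v e.2| - ∑ e ∈ E, w e * |βt e.1 - βt e.2|) := by
  set P : ℝ := ∑ k, (βt k - z k) * (v k - βt k) with hP
  set Gt : ℝ := ∑ e ∈ E, w e * |βt e.1 - βt e.2| with hGt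
  set Gv : ℝ := ∑ e ∈ E, w e * |v e.1 - v e.2| with hGv
  set K : ℝ := ∑ k, (v k - βt k)^2 with hK
  have hK0 : 0 ≤ K := Finset.sum_nonneg fun k _ => sq_nonneg _
  have step : ∀ t : ℝ, 0 < t → t ≤ 1 →
      0 ≤ (P + c2 * (Gv - Gt)) + t/2 * K := by
    intro t ht ht1
    have hmin' := hmin (fun k => βt k + t * (v k - βt k))
    have hq : ∑ k, ((βt k + t * (v k - βt k)) - z k)^2
        = ∑ k, (βt k - z k)^2 + t * (2 * P) + t^2 * K := by
      rw [hP, hK, Finset.mul_sum, Finset.mul_sum, Finset.mul_sum,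
        ← Finset.sum_add_distrib, ← Finset.sum_add_distrib]
      exact Finset.sum_congr rfl fun k _ => by ring
    rw [hq] at hmin'
    have hg : ∑ e ∈ E, w e *
          |(βt e.1 + t * (v e.1 - βt e.1)) - (βt e.2 + t * (v e.2 - βt e.2))|
        ≤ (1 - t) * Gt + t * Gv := by
      rw [hGt, hGv, Finset.mul_sum, Finset.mul_sum, ← Finset.sum_add_distrib]
      refine Finset.sum_le_sum fun e he => ?_
      have hwe := hw e he
      have habs : |(βt e.1 + t * (v e.1 - βt e.1)) - (βt e.2 + t * (v e.2 - βt e.2))|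
          ≤ (1 - t) * |βt e.1 - βt e.2| + t * |v e.1 - v e.2| := by
        have h' : (βt e.1 + t * (v e.1 - βt e.1)) - (βt e.2 + t * (v e.2 - βt e.2))
            = (1 - t) * (βt e.1 - βt e.2) + t * (v e.1 - v e.2) := by ring
        rw [h']
        calc |(1 - t) * (βt e.1 - βt e.2) + t * (v e.1 - v e.2)|
            ≤ |(1 - t) * (βt e.1 - βt e.2)| + |t * (v e.1 - v e.2)| := abs_add_le _ _
          _ = (1 - t) * |βt e.1 - βt e.2| + t * |v e.1 - v e.2| := by
              rw [abs_mul, abs_mul, abs_of_nonneg (by linarith : (0:ℝ) ≤ 1 - t),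
                abs_of_nonneg ht.le]
      calc w e * |(βt e.1 + t * (v e.1 - βt e.1)) - (βt e.2 + t * (v e.2 - βt e.2))|
          ≤ w e * ((1 - t) * |βt e.1 - βt e.2| + t * |v e.1 - v e.2|) :=
            mul_le_mul_of_nonneg_left habs hwe
        _ = (1 - t) * (w e * |βt e.1 - βt e.2|) + t * (w e * |v e.1 - v e.2|) := by
            ring
    have hg' := mul_le_mul_of_nonneg_left hg hc2
    have h3 : 0 ≤ t * (P + c2 * (Gv - Gt)) + t^2/2 * K := by nlinarith
    nlinarith
  by_contra hneg
  push_neg at hneg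
  rcases eq_or_lt_of_le hK0 with hK1 | hK1
  · have := step 1 one_pos le_rfl
    rw [← hK1] at this
    linarith
  · set D : ℝ := P + c2 * (Gv - Gt) with hD
    have hDneg : D < 0 := hneg
    have ht0 : 0 < min 1 (-D / K) := lt_min one_pos (div_pos (by linarith) hK1)
    have ht1 : min 1 (-D / K) ≤ 1 := min_le_left _ _
    have ht2 : min 1 (-D / K) ≤ -D / K := min_le_right _ _
    have hstep := step (min 1 (-D / K)) ht0 ht1
    have htK : min 1 (-D / K) * K ≤ -D := by
      rw [le_div_iff₀ hK1] at ht2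
      linarith
    linarith

/-- Proposition 2 of the paper: if `β̃` minimizes the total variation problem
`β ↦ (1/2)‖β − z‖² + (λ₂/L) Σ_{(i,j)∈E} w_{ij}|β_i − β_j|`, then the vector
`β*` with `β*_k = max(sign(β̃_k)·max(|β̃_k| − λ₁/L, 0), 0)` is the unique
minimizer of the nonnegatively constrained fused-lasso proximal problem. -/
theorem stmt_2 (d : ℕ) (hd : 1 ≤ d) (z : Fin d → ℝ) (E : Finset (Fin d × Fin d))
    (w : Fin d × Fin d → ℝ) (hw : ∀ e ∈ E, 0 ≤ w e)
    (lam1 lam2 L : ℝ) (h1 : 0 ≤ lam1) (h2 : 0 ≤ lam2) (hL : 0 < L)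
    (FTV F : (Fin d → ℝ) → ℝ)
    (hFTV : ∀ β, FTV β = (1/2) * ∑ k, (β k - z k)^2
        + (lam2 / L) * ∑ e ∈ E, w e * |β e.1 - β e.2|)
    (hF : ∀ β, F β = FTV β + (lam1 / L) * ∑ k, |β k|)
    (βt : Fin d → ℝ) (hβt : ∀ β : Fin d → ℝ, FTV βt ≤ FTV β)
    (βs : Fin d → ℝ)
    (hβs : ∀ k, βs k = max (Real.sign (βt k) * max (|βt k| - lam1 / L) 0) 0) :
    (∀ k, 0 ≤ βs k) ∧
    (∀ β : Fin d → ℝ, (∀ k, 0 ≤ β k) → F βs ≤ F β) ∧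
    (∀ β : Fin d → ℝ, (∀ k, 0 ≤ β k) → F β = F βs → β = βs) := by
  have hc0 : 0 ≤ lam1 / L := div_nonneg h1 hL.le
  have hc20 : 0 ≤ lam2 / L := div_nonneg h2 hL.le
  have hβs' : ∀ k, βs k = max (βt k - lam1 / L) 0 := fun k => by
    rw [hβs k, aux_T_eq _ _ hc0]
  have hβs0 : ∀ k, 0 ≤ βs k := fun k => by rw [hβs' k]; exact le_max_right _ _
  have hmin : ∀ β : Fin d → ℝ,
      (1/2) * ∑ k, (βt k - z k)^2 + (lam2/L) * ∑ e ∈ E, w e * |βt e.1 - βt e.2|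
      ≤ (1/2) * ∑ k, (β k - z k)^2 + (lam2/L) * ∑ e ∈ E, w e * |β e.1 - β e.2| := by
    intro β
    rw [← hFTV, ← hFTV]
    exact hβt β
  -- Part B : from the variational inequality and sign preservation of thresholding
  have hB : ∀ β : Fin d → ℝ,
      0 ≤ ∑ k, (βt k - z k) * (β k - βs k)
        + (lam2/L) * (∑ e ∈ E, w e * |β e.1 - β e.2|
          - ∑ e ∈ E, w e * |βs e.1 - βs e.2|) := by
    intro β
    have hvi := aux_vi z βt (lam2/L) hc20 E w hw hmin (fun k => β k + βt k - βs k)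
    have hrw : ∑ k, (βt k - z k) * ((β k + βt k - βs k) - βt k)
        = ∑ k, (βt k - z k) * (β k - βs k) :=
      Finset.sum_congr rfl fun k _ => by ring
    rw [hrw] at hvi
    have hgv : ∑ e ∈ E, w e * |(β e.1 + βt e.1 - βs e.1) - (β e.2 + βt e.2 - βs e.2)|
          + ∑ e ∈ E, w e * |βs e.1 - βs e.2|
        ≤ ∑ e ∈ E, w e * |β e.1 - β e.2| + ∑ e ∈ E, w e * |βt e.1 - βt e.2| := by
      rw [← Finset.sum_add_distrib, ← Finset.sum_add_distrib]
      refine Finset.sum_le_sum fun e he => ?_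
      have hwe := hw e he
      have hedge := aux_edge (βt e.1) (βt e.2) (lam1/L)
      rw [← hβs' e.1, ← hβs' e.2] at hedge
      have htri : |(β e.1 + βt e.1 - βs e.1) - (β e.2 + βt e.2 - βs e.2)|
          ≤ |β e.1 - β e.2| + |(βt e.1 - βt e.2) - (βs e.1 - βs e.2)| := by
        have h' : (β e.1 + βt e.1 - βs e.1) - (β e.2 + βt e.2 - βs e.2)
            = (β e.1 - β e.2) + ((βt e.1 - βt e.2) - (βs e.1 - βs e.2)) := by ring
        rw [h']
        exact abs_add_le _ _
      have hsum : |(β e.1 + βt e.1 - βs e.1) - (β e.2 + βt e.2 - βs e.2)|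
            + |βs e.1 - βs e.2|
          ≤ |β e.1 - β e.2| + |βt e.1 - βt e.2| := by linarith
      calc w e * |(β e.1 + βt e.1 - βs e.1) - (β e.2 + βt e.2 - βs e.2)|
            + w e * |βs e.1 - βs e.2|
          = w e * (|(β e.1 + βt e.1 - βs e.1) - (β e.2 + βt e.2 - βs e.2)|
            + |βs e.1 - βs e.2|) := by ring
        _ ≤ w e * (|β e.1 - β e.2| + |βt e.1 - βt e.2|) :=
            mul_le_mul_of_nonneg_left hsum hwe
        _ = w e * |β e.1 - β e.2| + w e * |βt e.1 - βt e.2| := by ring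
    have hgv' : ∑ e ∈ E, w e * |(β e.1 + βt e.1 - βs e.1) - (β e.2 + βt e.2 - βs e.2)|
          - ∑ e ∈ E, w e * |βt e.1 - βt e.2|
        ≤ ∑ e ∈ E, w e * |β e.1 - β e.2| - ∑ e ∈ E, w e * |βs e.1 - βs e.2| := by
      linarith
    have := mul_le_mul_of_nonneg_left hgv' hc20
    linarith
  -- Part A : per-coordinate prox inequality
  have hA : ∀ β : Fin d → ℝ, (∀ k, 0 ≤ β k) →
      0 ≤ ∑ k, ((βs k - βt k) * (β k - βs k)) + (lam1/L) * (∑ k, β k - ∑ k, βs k) := by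
    intro β hβ
    have h0 : 0 ≤ ∑ k, ((βs k - βt k) * (β k - βs k) + (lam1/L) * (β k - βs k)) := by
      refine Finset.sum_nonneg fun k _ => ?_
      rw [hβs' k]
      exact aux_prox (βt k) (β k) (lam1/L) hc0 (hβ k)
    rw [Finset.sum_add_distrib, ← Finset.mul_sum, Finset.sum_sub_distrib] at h0
    exact h0
  have habsum : ∀ γ : Fin d → ℝ, (∀ k, 0 ≤ γ k) → ∑ k, |γ k| = ∑ k, γ k :=
    fun γ hγ => Finset.sum_congr rfl fun k _ => abs_of_nonneg (hγ k)
  -- key strong optimality inequality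
  have key : ∀ β : Fin d → ℝ, (∀ k, 0 ≤ β k) →
      F βs + (1/2) * ∑ k, (β k - βs k)^2 ≤ F β := by
    intro β hβ
    rw [hF, hF, hFTV, hFTV, habsum β hβ, habsum βs hβs0]
    have hq2 : ∑ k, (β k - z k)^2
        = ∑ k, (βs k - z k)^2 + 2 * ∑ k, ((βs k - βt k) * (β k - βs k))
          + 2 * ∑ k, ((βt k - z k) * (β k - βs k)) + ∑ k, (β k - βs k)^2 := by
      rw [Finset.mul_sum, Finset.mul_sum, ← Finset.sum_add_distrib,
        ← Finset.sum_add_distrib, ← Finset.sum_add_distrib]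
      exact Finset.sum_congr rfl fun k _ => by ring
    have hA' := hA β hβ
    have hB' := hB β
    rw [hq2]
    nlinarith [hA', hB']
  refine ⟨hβs0, fun β hβ => ?_, fun β hβ hFeq => ?_⟩
  · have h0 : 0 ≤ ∑ k, (β k - βs k)^2 := Finset.sum_nonneg fun k _ => sq_nonneg _
    have := key β hβ
    linarith
  · have hk := key β hβ
    rw [hFeq] at hk
    have h0 : 0 ≤ ∑ k, (β k - βs k)^2 := Finset.sum_nonneg fun k _ => sq_nonneg _
    have h1' : ∑ k, (β k - βs k)^2 = 0 := le_antisymm (by linarith) h0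
    funext k
    have h2' := (Finset.sum_eq_zero_iff_of_nonneg
      (fun k _ => sq_nonneg (β k - βs k))).mp h1' k (Finset.mem_univ k)
    have h3' : β k - βs k = 0 := by
      nlinarith [sq_nonneg (β k - βs k)]
    linarith
end

section
/- FISTA-type accelerated convergence for the constrained problem: with the momentum sequence y^k = β^k + ((t_k − 1)/t_{k+1})(β^k − β^{k−1}), t_{k+1} = (1 + √(1 + 4t_k²))/2, t₁ = 1, and β^{k+1} the proximal step at z^k = y^k − (1/L)∇l(y^k), the objective satisfies F(β^k) − F(β*) ≤ 2L‖β⁰ − β*‖²/(k+1)². -/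
/-!
The proximal-gradient step `p` from `y` satisfies, for every feasible `x`,
`L/2 (‖p - x‖² - ‖y - x‖²) ≤ F x - F p`: the descent lemma bounds `l p` from above, convexity
bounds `l x` from below, and the prox objective is `L`-strongly convex on the convex feasible set.
Applying this at `x = (1 - 1/t_{k+1}) β^k + (1/t_{k+1}) β*` and using `t_{k+1}² - t_{k+1} = t_k²`
shows that `t_k² (F β^k - F β*) + L/2 ‖t_k β^k - (t_k - 1) β^{k-1} - β*‖²` is nonincreasing, and
`t_k ≥ (k + 1)/2` turns its initial value `L/2 ‖β⁰ - β*‖²` into the rate.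
-/

open Set Filter Topology
open scoped RealInnerProductSpace NNReal

section Calculus

variable {H : Type*} [NormedAddCommGroup H] [InnerProductSpace ℝ H] [CompleteSpace H] {f : H → ℝ}

lemma HasGradientAt.hasDerivAt_comp_add_smul {g c d : H} {s : ℝ}
    (hf : HasGradientAt f g (c + s • d)) :
    HasDerivAt (fun r : ℝ => f (c + r • d)) ⟪g, d⟫ s := by
  have hline : HasDerivAt (fun r : ℝ => c + r • d) d s := by
    simpa using ((hasDerivAt_id s).smul_const d).const_add c
  have h := hf.hasFDerivAt.comp_hasDerivAt s hline
  simp only [InnerProductSpace.toDual_apply_apply] at h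
  exact h

theorem ConvexOn.add_inner_le_of_hasGradientAt {g y : H} (hf : ConvexOn ℝ univ f)
    (hg : HasGradientAt f g y) (x : H) : f y + ⟪g, x - y⟫ ≤ f x := by
  have hline : ConvexOn ℝ univ fun r : ℝ => f (y + r • (x - y)) := by
    simpa [Function.comp_def, AffineMap.lineMap_apply, add_comm] using
      hf.comp_affineMap (AffineMap.lineMap y x)
  have hder : HasDerivAt (fun r : ℝ => f (y + r • (x - y))) ⟪g, x - y⟫ 0 :=
    HasGradientAt.hasDerivAt_comp_add_smul (by simpa using hg)
  have hslope := hline.le_slope_of_hasDerivAt (mem_univ 0) (mem_univ 1) one_pos hder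
  simp only [slope_def_field, one_smul, add_sub_cancel, zero_smul, add_zero, sub_zero,
    div_one] at hslope
  linarith

theorem le_add_inner_add_sq_of_lipschitzWith_gradient {g : H → H} {K : ℝ≥0}
    (hg : ∀ x, HasGradientAt f (g x) x) (hlip : LipschitzWith K g) (x y : H) :
    f x ≤ f y + ⟪g y, x - y⟫ + K / 2 * ‖x - y‖ ^ 2 := by
  set d := x - y
  set φ : ℝ → ℝ := fun r => f (y + r • d) - r * ⟪g y, d⟫ - K / 2 * ‖d‖ ^ 2 * r ^ 2
  have hφ : ∀ r, HasDerivAt φ (⟪g (y + r • d), d⟫ - ⟪g y, d⟫ - K * ‖d‖ ^ 2 * r) r := by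
    intro r
    refine ((((hg (y + r • d)).hasDerivAt_comp_add_smul).sub
      ((hasDerivAt_id r).mul_const ⟪g y, d⟫)).sub
      ((hasDerivAt_pow 2 r).const_mul (K / 2 * ‖d‖ ^ 2))).congr_deriv ?_
    ring
  obtain ⟨c, hc, hslope⟩ := exists_hasDerivAt_eq_slope φ _ one_pos
    (fun r _ => (hφ r).continuousAt.continuousWithinAt) (fun r _ => hφ r)
  have hgc : ⟪g (y + c • d), d⟫ - ⟪g y, d⟫ ≤ K * ‖d‖ ^ 2 * c := calc
    ⟪g (y + c • d), d⟫ - ⟪g y, d⟫ = ⟪g (y + c • d) - g y, d⟫ := (inner_sub_left _ _ _).symm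
    _ ≤ ‖g (y + c • d) - g y‖ * ‖d‖ := real_inner_le_norm _ _
    _ ≤ K * ‖c • d‖ * ‖d‖ := by
      gcongr
      simpa [dist_eq_norm] using hlip.dist_le_mul (y + c • d) y
    _ = K * ‖d‖ ^ 2 * c := by
      rw [norm_smul, Real.norm_of_nonneg hc.1.le]; ring
  have hφ01 : (φ 1 - φ 0) / (1 - 0) ≤ 0 := by rw [← hslope]; linarith
  have hφ1 : φ 1 = f x - ⟪g y, d⟫ - K / 2 * ‖d‖ ^ 2 := by simp [φ, d]
  have hφ0 : φ 0 = f y := by simp [φ]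
  rw [sub_zero, div_one, hφ1, hφ0] at hφ01
  linarith

end Calculus

lemma le_of_forall_mem_Ioc_le_add_mul {a b c : ℝ} (h : ∀ θ ∈ Ioc (0 : ℝ) 1, a ≤ b + θ * c) :
    a ≤ b := by
  have hlim : Tendsto (fun θ : ℝ => b + θ * c) (𝓝[>] 0) (𝓝 b) := by
    have : Tendsto (fun θ : ℝ => b + θ * c) (𝓝 0) (𝓝 (b + 0 * c)) :=
      (tendsto_id.mul_const c).const_add b
    simpa using this.mono_left nhdsWithin_le_nhds
  exact ge_of_tendsto hlim (eventually_of_mem (Ioc_mem_nhdsGT one_pos) h)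

section Prox

variable {H : Type*} [NormedAddCommGroup H] [InnerProductSpace ℝ H]

lemma norm_one_sub_smul_add_smul_sub_sq (u v z : H) (θ : ℝ) :
    ‖(1 - θ) • u + θ • v - z‖ ^ 2
      = (1 - θ) * ‖u - z‖ ^ 2 + θ * ‖v - z‖ ^ 2 - θ * (1 - θ) * ‖v - u‖ ^ 2 := by
  rw [show (1 - θ) • u + θ • v - z = (u - z) + θ • (v - u) by module, norm_add_sq_real,
    norm_smul, mul_pow, Real.norm_eq_abs, sq_abs, real_inner_smul_right,
    show v - z = (u - z) + (v - u) by abel, norm_add_sq_real]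
  ring

theorem IsMinOn.add_norm_sq_le {S : Set H} {Γ : H → ℝ} (hS : Convex ℝ S) (hΓ : ConvexOn ℝ S Γ)
    {c : ℝ} {z p x : H} (hp : p ∈ S) (hmin : IsMinOn (fun b => c / 2 * ‖b - z‖ ^ 2 + Γ b) S p)
    (hx : x ∈ S) :
    c / 2 * ‖p - z‖ ^ 2 + Γ p + c / 2 * ‖x - p‖ ^ 2 ≤ c / 2 * ‖x - z‖ ^ 2 + Γ x := by
  -- compare `p` with `(1 - θ) • p + θ • x` and let `θ → 0`
  refine le_of_forall_mem_Ioc_le_add_mul (c := c / 2 * ‖x - p‖ ^ 2) fun θ ⟨hθ0, hθ1⟩ => ?_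
  have hmem : (1 - θ) • p + θ • x ∈ S := hS hp hx (by linarith) hθ0.le (by ring)
  have hminθ := isMinOn_iff.1 hmin _ hmem
  have hΓθ : Γ ((1 - θ) • p + θ • x) ≤ (1 - θ) * Γ p + θ * Γ x :=
    hΓ.2 hp hx (by linarith) hθ0.le (by ring)
  simp only [norm_one_sub_smul_add_smul_sub_sq] at hminθ
  have key : θ * (c / 2 * ‖p - z‖ ^ 2 + Γ p + c / 2 * ‖x - p‖ ^ 2)
      ≤ θ * (c / 2 * ‖x - z‖ ^ 2 + Γ x + θ * (c / 2 * ‖x - p‖ ^ 2)) := by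
    linear_combination hminθ + hΓθ
  exact le_of_mul_le_mul_left key hθ0

lemma half_mul_norm_sub_sub_smul_sq (b y v : H) {L : ℝ} (hL : L ≠ 0) :
    L / 2 * ‖b - (y - (1 / L) • v)‖ ^ 2
      = L / 2 * ‖b - y‖ ^ 2 + ⟪v, b - y⟫ + ‖v‖ ^ 2 / (2 * L) := by
  rw [show b - (y - (1 / L) • v) = (b - y) + (1 / L) • v by abel, norm_add_sq_real, norm_smul,
    real_inner_smul_right, mul_pow, Real.norm_eq_abs, sq_abs, real_inner_comm]
  field_simp

theorem proxGrad_fundamental_inequality [CompleteSpace H] {f G : H → ℝ} {g : H → H} {S : Set H}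
    {L : ℝ} (hL : 0 < L) (hS : Convex ℝ S) (hf : ConvexOn ℝ univ f)
    (hg : ∀ x, HasGradientAt f (g x) x)
    (hlip : LipschitzWith L.toNNReal g) (hG : ConvexOn ℝ S G) {y p x : H} (hp : p ∈ S)
    (hmin : IsMinOn (fun b => L / 2 * ‖b - (y - (1 / L) • g y)‖ ^ 2 + G b) S p) (hx : x ∈ S) :
    L / 2 * (‖p - x‖ ^ 2 - ‖y - x‖ ^ 2) ≤ f x + G x - (f p + G p) := by
  have hprox := hmin.add_norm_sq_le hS hG hp hx
  simp only [half_mul_norm_sub_sub_smul_sq _ _ _ hL.ne'] at hprox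
  have hdesc := le_add_inner_add_sq_of_lipschitzWith_gradient hg hlip p y
  have hcvx := hf.add_inner_le_of_hasGradientAt (hg y) x
  rw [Real.coe_toNNReal L hL.le] at hdesc
  rw [norm_sub_rev p x, norm_sub_rev y x]
  linarith

end Prox

noncomputable def nextMomentum (t : ℝ) : ℝ := (1 + √(1 + 4 * t ^ 2)) / 2

lemma nextMomentum_sq_sub_self (t : ℝ) : nextMomentum t ^ 2 - nextMomentum t = t ^ 2 := by
  have hs : √(1 + 4 * t ^ 2) ^ 2 = 1 + 4 * t ^ 2 := Real.sq_sqrt (by positivity)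
  unfold nextMomentum
  linear_combination hs / 4

lemma add_half_le_nextMomentum (t : ℝ) : t + 1 / 2 ≤ nextMomentum t := by
  have : 2 * t ≤ √(1 + 4 * t ^ 2) :=
    Real.le_sqrt_of_sq_le (by nlinarith)
  unfold nextMomentum
  linarith

lemma half_succ_le_of_nextMomentum {t : ℕ → ℝ} (ht1 : t 1 = 1)
    (htrec : ∀ k : ℕ, 1 ≤ k → t (k + 1) = nextMomentum (t k)) :
    ∀ k : ℕ, 1 ≤ k → ((k : ℝ) + 1) / 2 ≤ t k := by
  intro k hk
  induction k, hk using Nat.le_induction with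
  | base => norm_num [ht1]
  | succ k hk ih =>
    rw [htrec k hk]
    have := add_half_le_nextMomentum (t k)
    push_cast
    linarith

section Energy

variable {H : Type*} [NormedAddCommGroup H] [InnerProductSpace ℝ H] {S : Set H} {F : H → ℝ}
  {L : ℝ}

lemma norm_smul_sq (c : ℝ) (v : H) : ‖c • v‖ ^ 2 = c ^ 2 * ‖v‖ ^ 2 := by
  rw [norm_smul, mul_pow, Real.norm_eq_abs, sq_abs]

theorem fista_energy_step (hS : Convex ℝ S) (hF : ConvexOn ℝ S F) {s τ : ℝ} (hτ : 1 ≤ τ)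
    (hτs : τ ^ 2 - τ = s ^ 2) {x a a' y p : H} (hx : x ∈ S) (ha : a ∈ S)
    (hy : y = a + ((s - 1) / τ) • (a - a'))
    (hprox : ∀ b ∈ S, L / 2 * (‖p - b‖ ^ 2 - ‖y - b‖ ^ 2) ≤ F b - F p) :
    τ ^ 2 * (F p - F x) + L / 2 * ‖τ • p - (τ - 1) • a - x‖ ^ 2
      ≤ s ^ 2 * (F a - F x) + L / 2 * ‖s • a - (s - 1) • a' - x‖ ^ 2 := by
  have hτ0 : τ ≠ 0 := by positivity
  set θ := τ⁻¹
  have hθ0 : 0 ≤ θ := by positivity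
  have hθ1 : 0 ≤ 1 - θ := by simpa using inv_le_one_of_one_le₀ hτ
  set xθ := (1 - θ) • a + θ • x
  have hxθ : xθ ∈ S := hS ha hx hθ1 hθ0 (by ring)
  have hFxθ : F xθ ≤ (1 - θ) * F a + θ * F x := hF.2 ha hx hθ1 hθ0 (by ring)
  have hp : τ • p - (τ - 1) • a - x = τ • (p - xθ) := by
    simp only [xθ, θ]
    match_scalars <;> field_simp
  have hy' : s • a - (s - 1) • a' - x = τ • (y - xθ) := by
    simp only [hy, xθ, θ]
    match_scalars <;> field_simp
    ring
  have hstep := mul_le_mul_of_nonneg_left (hprox xθ hxθ) (sq_nonneg τ)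
  rw [hp, hy', norm_smul_sq, norm_smul_sq]
  have hτθ : τ ^ 2 * θ = τ := by rw [sq, mul_assoc, mul_inv_cancel₀ hτ0, mul_one]
  linear_combination hstep + τ ^ 2 * hFxθ + (F a - F x) * hτs + (F x - F a) * hτθ

theorem fista_energy_le (hS : Convex ℝ S) (hF : ConvexOn ℝ S F) {x : H} (hx : x ∈ S)
    {β y : ℕ → H} {t : ℕ → ℝ} (ht1 : t 1 = 1)
    (htrec : ∀ k : ℕ, 1 ≤ k → t (k + 1) = nextMomentum (t k)) (hy1 : y 1 = β 0)
    (hyrec : ∀ k : ℕ, 1 ≤ k → y (k + 1) = β k + ((t k - 1) / t (k + 1)) • (β k - β (k - 1)))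
    (hβS : ∀ k : ℕ, 1 ≤ k → β k ∈ S)
    (hprox : ∀ k : ℕ, 1 ≤ k → ∀ b ∈ S, L / 2 * (‖β k - b‖ ^ 2 - ‖y k - b‖ ^ 2) ≤ F b - F (β k)) :
    ∀ k : ℕ, 1 ≤ k → t k ^ 2 * (F (β k) - F x)
      + L / 2 * ‖t k • β k - (t k - 1) • β (k - 1) - x‖ ^ 2 ≤ L / 2 * ‖β 0 - x‖ ^ 2 := by
  intro k hk
  induction k, hk using Nat.le_induction with
  | base =>
    have := hprox 1 le_rfl x hx
    simp only [ht1, hy1, one_pow, one_mul, one_smul, sub_self, zero_smul, sub_zero,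
      Nat.sub_self] at this ⊢
    linarith
  | succ k hk ih =>
    have hτ : 1 ≤ t (k + 1) := by
      have := half_succ_le_of_nextMomentum ht1 htrec (k + 1) (by omega)
      push_cast at this
      linarith [(Nat.one_le_cast (α := ℝ)).2 hk]
    have hτs : t (k + 1) ^ 2 - t (k + 1) = t k ^ 2 := by
      rw [htrec k hk, nextMomentum_sq_sub_self]
    have := fista_energy_step hS hF hτ hτs hx (hβS k hk) (hyrec k hk) (hprox (k + 1) (by omega))
    rw [Nat.add_sub_cancel]
    linarith

theorem fista_rate (hS : Convex ℝ S) (hF : ConvexOn ℝ S F) (hL : 0 ≤ L) {x : H} (hx : x ∈ S)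
    {β y : ℕ → H} {t : ℕ → ℝ} (ht1 : t 1 = 1)
    (htrec : ∀ k : ℕ, 1 ≤ k → t (k + 1) = nextMomentum (t k)) (hy1 : y 1 = β 0)
    (hyrec : ∀ k : ℕ, 1 ≤ k → y (k + 1) = β k + ((t k - 1) / t (k + 1)) • (β k - β (k - 1)))
    (hβS : ∀ k : ℕ, 1 ≤ k → β k ∈ S)
    (hprox : ∀ k : ℕ, 1 ≤ k → ∀ b ∈ S, L / 2 * (‖β k - b‖ ^ 2 - ‖y k - b‖ ^ 2) ≤ F b - F (β k)) :
    ∀ k : ℕ, 1 ≤ k → F (β k) - F x ≤ 2 * L * ‖β 0 - x‖ ^ 2 / (k + 1) ^ 2 := by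
  intro k hk
  have henergy := fista_energy_le hS hF hx ht1 htrec hy1 hyrec hβS hprox k hk
  have ht := half_succ_le_of_nextMomentum ht1 htrec k hk
  have hgap : t k ^ 2 * (F (β k) - F x) ≤ L / 2 * ‖β 0 - x‖ ^ 2 := by
    have : 0 ≤ L / 2 * ‖t k • β k - (t k - 1) • β (k - 1) - x‖ ^ 2 := by positivity
    linarith
  rw [le_div_iff₀ (by positivity)]
  rcases le_or_gt (F (β k) - F x) 0 with hneg | hpos
  · exact (mul_nonpos_of_nonpos_of_nonneg hneg (by positivity)).trans (by positivity)
  · have hsq : ((k : ℝ) + 1) ^ 2 ≤ 4 * t k ^ 2 := by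
      nlinarith [pow_le_pow_left₀ (by positivity) ht 2]
    calc (F (β k) - F x) * ((k : ℝ) + 1) ^ 2 ≤ (F (β k) - F x) * (4 * t k ^ 2) := by gcongr
      _ ≤ 2 * L * ‖β 0 - x‖ ^ 2 := by linarith

end Energy

theorem ConvexOn.finsetSum {E ι : Type*} [AddCommGroup E] [Module ℝ E] {S : Set E}
    (hS : Convex ℝ S) {s : Finset ι} {f : ι → E → ℝ} (hf : ∀ i ∈ s, ConvexOn ℝ S (f i)) :
    ConvexOn ℝ S fun x => ∑ i ∈ s, f i x := by
  classical
  induction s using Finset.induction_on with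
  | empty => simpa using convexOn_const 0 hS
  | insert i s hi ih =>
    simp only [Finset.sum_insert hi]
    exact (hf i (Finset.mem_insert_self i s)).add
      (ih fun j hj => hf j (Finset.mem_insert_of_mem hj))

lemma convexOn_abs_linearMap {E : Type*} [AddCommGroup E] [Module ℝ E] (φ : E →ₗ[ℝ] ℝ) :
    ConvexOn ℝ univ fun x => |φ x| :=
  convexOn_univ_norm.comp_linearMap φ

def fusedLassoPenalty {ι : Type*} [Fintype ι] (lam1 lam2 : ℝ) (E : Finset (ι × ι))
    (w : ι × ι → ℝ) (β : EuclideanSpace ℝ ι) : ℝ :=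
  lam1 * ∑ i, |β i| + lam2 * ∑ e ∈ E, w e * |β e.1 - β e.2|

theorem convexOn_fusedLassoPenalty {ι : Type*} [Fintype ι] {lam1 lam2 : ℝ} (hlam1 : 0 ≤ lam1)
    (hlam2 : 0 ≤ lam2) {E : Finset (ι × ι)} {w : ι × ι → ℝ} (hw : ∀ e ∈ E, 0 ≤ w e) :
    ConvexOn ℝ univ (fusedLassoPenalty lam1 lam2 E w) := by
  refine ((ConvexOn.finsetSum convex_univ fun i _ => ?_).smul hlam1).add
    ((ConvexOn.finsetSum convex_univ fun e he => ?_).smul hlam2)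
  · exact convexOn_abs_linearMap (EuclideanSpace.projₗ i)
  · exact (convexOn_abs_linearMap
      (EuclideanSpace.projₗ e.1 - EuclideanSpace.projₗ e.2)).smul (hw e he)

theorem convex_setOf_forall_nonneg (ι : Type*) :
    Convex ℝ {β : EuclideanSpace ℝ ι | ∀ i, 0 ≤ β i} := by
  intro a ha b hb μ ν hμ hν _ i
  simp only [PiLp.add_apply, PiLp.smul_apply, smul_eq_mul]
  exact add_nonneg (mul_nonneg hμ (ha i)) (mul_nonneg hν (hb i))

open Finset in
theorem stmt_7_general (d : ℕ)
    (l : EuclideanSpace ℝ (Fin d) → ℝ) (gl : EuclideanSpace ℝ (Fin d) → EuclideanSpace ℝ (Fin d))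
    (L : ℝ) (hL : 0 < L)
    (hconv : ConvexOn ℝ Set.univ l)
    (hgrad : ∀ x, HasGradientAt l (gl x) x)
    (hlip : LipschitzWith L.toNNReal gl)
    (lam1 lam2 : ℝ) (hlam1 : 0 ≤ lam1) (hlam2 : 0 ≤ lam2)
    (E : Finset (Fin d × Fin d)) (w : Fin d × Fin d → ℝ) (hw : ∀ e ∈ E, 0 ≤ w e)
    (F : EuclideanSpace ℝ (Fin d) → ℝ)
    (hF : ∀ β, F β = l β + lam1 * ∑ i, |β i| + lam2 * ∑ e ∈ E, w e * |β e.1 - β e.2|)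
    (βstar : EuclideanSpace ℝ (Fin d)) (hβstar_pos : ∀ i, 0 ≤ βstar i)
    (β y : ℕ → EuclideanSpace ℝ (Fin d)) (t : ℕ → ℝ)
    (ht1 : t 1 = 1)
    (htrec : ∀ k : ℕ, 1 ≤ k → t (k + 1) = (1 + Real.sqrt (1 + 4 * (t k)^2)) / 2)
    (hy1 : y 1 = β 0)
    (hyrec : ∀ k : ℕ, 1 ≤ k →
      y (k + 1) = β k + ((t k - 1) / t (k + 1)) • (β k - β (k - 1)))
    (hstep : ∀ k : ℕ, 1 ≤ k →
      (∀ i, 0 ≤ β k i) ∧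
      (∀ b : EuclideanSpace ℝ (Fin d), (∀ i, 0 ≤ b i) →
        (1/2) * ‖β k - (y k - (1 / L) • gl (y k))‖^2
            + (lam1 / L) * ∑ i, |β k i|
            + (lam2 / L) * ∑ e ∈ E, w e * |β k e.1 - β k e.2|
          ≤ (1/2) * ‖b - (y k - (1 / L) • gl (y k))‖^2
            + (lam1 / L) * ∑ i, |b i|
            + (lam2 / L) * ∑ e ∈ E, w e * |b e.1 - b e.2|)) :
    ∀ k : ℕ, 1 ≤ k → F (β k) - F βstar ≤ 2 * L * ‖β 0 - βstar‖^2 / (k + 1)^2 := by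
  set S := {b : EuclideanSpace ℝ (Fin d) | ∀ i, 0 ≤ b i}
  set G := fusedLassoPenalty lam1 lam2 E w
  have hS : Convex ℝ S := convex_setOf_forall_nonneg (Fin d)
  have hG : ConvexOn ℝ S G :=
    (convexOn_fusedLassoPenalty hlam1 hlam2 hw).subset (subset_univ S) hS
  have hFG : F = fun b => l b + G b := funext fun b => by rw [hF, add_assoc]; rfl
  have hFS : ConvexOn ℝ S F := hFG ▸ (hconv.subset (subset_univ S) hS).add hG
  have hmin : ∀ k : ℕ, 1 ≤ k →
      IsMinOn (fun b => L / 2 * ‖b - (y k - (1 / L) • gl (y k))‖ ^ 2 + G b) S (β k) := by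
    intro k hk
    refine isMinOn_iff.2 fun b hb => ?_
    have hscaled := mul_le_mul_of_nonneg_left ((hstep k hk).2 b hb) hL.le
    simp only [G, fusedLassoPenalty]
    field_simp at hscaled ⊢
    linarith
  refine fista_rate hS hFS hL.le hβstar_pos ht1 htrec hy1 hyrec (fun k hk => (hstep k hk).1)
    fun k hk b hb => ?_
  rw [hFG]
  exact proxGrad_fundamental_inequality hL hS hconv hgrad hlip hG (hstep k hk).1 (hmin k hk) hb

open Finset in
/-- FISTA-type `O(1/k²)` accelerated convergence for the nonnegatively constrained
generalized fused lasso: with momentum sequence `t₁ = 1`,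
`t_{k+1} = (1 + √(1 + 4t_k²))/2`, `y^{k+1} = β^k + ((t_k − 1)/t_{k+1})(β^k − β^{k−1})`,
and `β^k` the proximal step at `y^k − (1/L)∇l(y^k)`, the objective satisfies
`F(β^k) − F(β*) ≤ 2L‖β⁰ − β*‖²/(k+1)²`. -/
theorem stmt_7 (d : ℕ) (hd : 1 ≤ d)
    (l : EuclideanSpace ℝ (Fin d) → ℝ) (gl : EuclideanSpace ℝ (Fin d) → EuclideanSpace ℝ (Fin d))
    (L : ℝ) (hL : 0 < L)
    (hconv : ConvexOn ℝ Set.univ l)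
    (hgrad : ∀ x, HasGradientAt l (gl x) x)
    (hlip : LipschitzWith L.toNNReal gl)
    (lam1 lam2 : ℝ) (hlam1 : 0 ≤ lam1) (hlam2 : 0 ≤ lam2)
    (E : Finset (Fin d × Fin d)) (w : Fin d × Fin d → ℝ) (hw : ∀ e ∈ E, 0 ≤ w e)
    (F : EuclideanSpace ℝ (Fin d) → ℝ)
    (hF : ∀ β, F β = l β + lam1 * ∑ i, |β i| + lam2 * ∑ e ∈ E, w e * |β e.1 - β e.2|)
    (βstar : EuclideanSpace ℝ (Fin d)) (hβstar_pos : ∀ i, 0 ≤ βstar i)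
    (hβstar_min : ∀ β : EuclideanSpace ℝ (Fin d), (∀ i, 0 ≤ β i) → F βstar ≤ F β)
    (β y : ℕ → EuclideanSpace ℝ (Fin d)) (t : ℕ → ℝ)
    (hβ0_pos : ∀ i, 0 ≤ β 0 i)
    (ht1 : t 1 = 1)
    (htrec : ∀ k : ℕ, 1 ≤ k → t (k + 1) = (1 + Real.sqrt (1 + 4 * (t k)^2)) / 2)
    (hy1 : y 1 = β 0)
    (hyrec : ∀ k : ℕ, 1 ≤ k →
      y (k + 1) = β k + ((t k - 1) / t (k + 1)) • (β k - β (k - 1)))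
    (hstep : ∀ k : ℕ, 1 ≤ k →
      (∀ i, 0 ≤ β k i) ∧
      (∀ b : EuclideanSpace ℝ (Fin d), (∀ i, 0 ≤ b i) →
        (1/2) * ‖β k - (y k - (1 / L) • gl (y k))‖^2
            + (lam1 / L) * ∑ i, |β k i|
            + (lam2 / L) * ∑ e ∈ E, w e * |β k e.1 - β k e.2|
          ≤ (1/2) * ‖b - (y k - (1 / L) • gl (y k))‖^2
            + (lam1 / L) * ∑ i, |b i|
            + (lam2 / L) * ∑ e ∈ E, w e * |b e.1 - b e.2|)) :
    ∀ k : ℕ, 1 ≤ k → F (β k) - F βstar ≤ 2 * L * ‖β 0 - βstar‖^2 / (k + 1)^2 :=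
  stmt_7_general d l gl L hL hconv hgrad hlip lam1 lam2 hlam1 hlam2 E w hw F hF βstar hβstar_pos β y
    t ht1 htrec hy1 hyrec hstep
end

section
/- Dual of TV as a projection onto a flow polytope: the optimal value of min_β (1/2)‖β − z‖² + Σ_{(i,j)∈E} θ_{ij}|β_i − β_j| equals (1/2)‖z‖² minus the optimal value of min over edge-flows ξ of (1/2)‖z − Σ_{(i,j)∈E} ξ^{ij}‖², where each ξ^{ij} ∈ ℝ^d satisfies ξ^{ij}_k = 0 for k ∉ {i,j}, ξ^{ij}_i + ξ^{ij}_j = 0, and |ξ^{ij}_i| ≤ θ_{ij}. -/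
open Finset


private def tvVE {d : ℕ} (e : Fin d × Fin d) : Fin d → ℝ :=
  fun k => (if k = e.1 then (1:ℝ) else 0) - (if k = e.2 then 1 else 0)

private lemma tv_sum_vE_mul {d : ℕ} (e : Fin d × Fin d) (β : Fin d → ℝ) :
    ∑ k, tvVE e k * β k = β e.1 - β e.2 := by
  simp [tvVE, sub_mul, ite_mul, Finset.sum_sub_distrib]

private lemma tv_feas_rep {d : ℕ} {ξe : Fin d → ℝ} {e : Fin d × Fin d}
    (h0 : ∀ k, k ≠ e.1 → k ≠ e.2 → ξe k = 0) (h1 : ξe e.1 + ξe e.2 = 0) :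
    ∀ k, ξe k = ξe e.1 * tvVE e k := by
  intro k
  by_cases h12 : e.1 = e.2
  · have hz : ξe e.1 = 0 := by rw [← h12] at h1; linarith
    by_cases hk : k = e.1
    · rw [hk, hz]; ring
    · rw [h0 k hk (h12 ▸ hk), hz]; ring
  · by_cases hk1 : k = e.1
    · subst hk1; simp [tvVE, h12]
    · by_cases hk2 : k = e.2
      · subst hk2
        have hv : tvVE e e.2 = -1 := by simp [tvVE, Ne.symm h12]
        rw [hv]; linarith
      · rw [h0 k hk1 hk2]; simp [tvVE, hk1, hk2]

private lemma tv_sum_vE_sq {d : ℕ} {e : Fin d × Fin d} (h12 : e.1 ≠ e.2) :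
    ∑ k, (tvVE e k)^2 = 2 := by
  have : ∀ k, (tvVE e k)^2 = (if k = e.1 then (1:ℝ) else 0) + (if k = e.2 then 1 else 0) := by
    intro k
    by_cases hk1 : k = e.1
    · subst hk1; simp [tvVE, h12]
    · by_cases hk2 : k = e.2 <;> simp [tvVE, hk1, hk2, Ne.symm h12]
  rw [Finset.sum_congr rfl fun k _ => this k]
  simp [Finset.sum_add_distrib]
  norm_num

private lemma tv_pairing {d : ℕ} (E : Finset (Fin d × Fin d))
    (ξ : (Fin d × Fin d) → Fin d → ℝ)
    (hF : ∀ e ∈ E, (∀ k, k ≠ e.1 → k ≠ e.2 → ξ e k = 0) ∧ ξ e e.1 + ξ e e.2 = 0)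
    (β : Fin d → ℝ) :
    ∑ e ∈ E, ξ e e.1 * (β e.1 - β e.2) = ∑ k, (∑ e ∈ E, ξ e k) * β k := by
  calc ∑ e ∈ E, ξ e e.1 * (β e.1 - β e.2)
      = ∑ e ∈ E, ∑ k, ξ e k * β k := by
        refine Finset.sum_congr rfl fun e he => ?_
        obtain ⟨h0, h1⟩ := hF e he
        rw [← tv_sum_vE_mul e β, Finset.mul_sum]
        exact Finset.sum_congr rfl fun k _ => by rw [tv_feas_rep h0 h1 k]; ring
    _ = ∑ k, (∑ e ∈ E, ξ e k) * β k := by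
        rw [Finset.sum_comm]
        exact Finset.sum_congr rfl fun k _ => (Finset.sum_mul ..).symm

private lemma tv_weak {d : ℕ} (z : Fin d → ℝ) (E : Finset (Fin d × Fin d))
    (θ : Fin d × Fin d → ℝ) (ξ : (Fin d × Fin d) → Fin d → ℝ)
    (hF : ∀ e ∈ E, (∀ k, k ≠ e.1 → k ≠ e.2 → ξ e k = 0) ∧
        ξ e e.1 + ξ e e.2 = 0 ∧ |ξ e e.1| ≤ θ e)
    (β : Fin d → ℝ) :
    (1/2) * ∑ k, (z k)^2 - (1/2) * ∑ k, (z k - ∑ e ∈ E, ξ e k)^2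
      ≤ (1/2) * ∑ k, (β k - z k)^2 + ∑ e ∈ E, θ e * |β e.1 - β e.2| := by
  set s : Fin d → ℝ := fun k => ∑ e ∈ E, ξ e k with hs
  have hpair : ∑ e ∈ E, ξ e e.1 * (β e.1 - β e.2) = ∑ k, s k * β k :=
    tv_pairing E ξ (fun e he => ⟨(hF e he).1, (hF e he).2.1⟩) β
  have hedge : ∑ e ∈ E, ξ e e.1 * (β e.1 - β e.2) ≤ ∑ e ∈ E, θ e * |β e.1 - β e.2| := by
    refine Finset.sum_le_sum fun e he => ?_
    calc ξ e e.1 * (β e.1 - β e.2) ≤ |ξ e e.1 * (β e.1 - β e.2)| := le_abs_self _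
      _ = |ξ e e.1| * |β e.1 - β e.2| := abs_mul _ _
      _ ≤ θ e * |β e.1 - β e.2| :=
          mul_le_mul_of_nonneg_right (hF e he).2.2 (abs_nonneg _)
  have hsq : (0:ℝ) ≤ ∑ k, (β k - z k + s k)^2 :=
    Finset.sum_nonneg fun k _ => sq_nonneg _
  have hexp : ∑ k, (β k - z k + s k)^2
      = ∑ k, (β k - z k)^2 + 2 * ∑ k, s k * β k
        - ∑ k, (z k)^2 + ∑ k, (z k - s k)^2 := by
    rw [Finset.mul_sum, ← Finset.sum_add_distrib, ← Finset.sum_sub_distrib,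
        ← Finset.sum_add_distrib]
    exact Finset.sum_congr rfl fun k _ => by ring
  linarith

private lemma tv_cs {d : ℕ} (z : Fin d → ℝ) (E : Finset (Fin d × Fin d))
    (θ : Fin d × Fin d → ℝ) (ξs : (Fin d × Fin d) → Fin d → ℝ)
    (hF : ∀ e ∈ E, (∀ k, k ≠ e.1 → k ≠ e.2 → ξs e k = 0) ∧
        ξs e e.1 + ξs e e.2 = 0 ∧ |ξs e e.1| ≤ θ e)
    (hopt : ∀ ξ : (Fin d × Fin d) → Fin d → ℝ, (∀ e ∈ E, (∀ k, k ≠ e.1 → k ≠ e.2 → ξ e k = 0) ∧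
        ξ e e.1 + ξ e e.2 = 0 ∧ |ξ e e.1| ≤ θ e) →
        (1/2) * ∑ k, (z k - ∑ e ∈ E, ξs e k)^2 ≤ (1/2) * ∑ k, (z k - ∑ e ∈ E, ξ e k)^2)
    {e : Fin d × Fin d} (he : e ∈ E) :
    ξs e e.1 * ((z e.1 - ∑ e' ∈ E, ξs e' e.1) - (z e.2 - ∑ e' ∈ E, ξs e' e.2))
      = θ e * |(z e.1 - ∑ e' ∈ E, ξs e' e.1) - (z e.2 - ∑ e' ∈ E, ξs e' e.2)| := by
  set β : Fin d → ℝ := fun k => z k - ∑ e' ∈ E, ξs e' k with hβ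
  obtain ⟨h0, h1, h2⟩ := hF e he
  have hθe : 0 ≤ θ e := le_trans (abs_nonneg _) h2
  by_cases h12 : e.1 = e.2
  · have hz : ξs e e.1 = 0 := by rw [← h12] at h1; linarith
    have hΔ : (z e.1 - ∑ e' ∈ E, ξs e' e.1) - (z e.2 - ∑ e' ∈ E, ξs e' e.2) = 0 := by
      rw [h12]; ring
    rw [hΔ, hz]; simp
  -- main case e.1 ≠ e.2
  set t₀ : ℝ := ξs e e.1 with ht₀
  set Δ : ℝ := β e.1 - β e.2 with hΔdef
  have ht₀mem : |t₀| ≤ θ e := h2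
  -- the key variational inequality
  have key : ∀ t : ℝ, |t| ≤ θ e → (t - t₀) * Δ ≤ (t - t₀) ^ 2 := by
    intro t ht
    set ξt : (Fin d × Fin d) → Fin d → ℝ :=
      Function.update ξs e (fun k => t * tvVE e k) with hξt
    have hξte : ∀ k, ξt e k = t * tvVE e k := fun k => by
      simp [ξt, Function.update_self]
    have hξtne : ∀ e', e' ≠ e → ξt e' = ξs e' := fun e' h =>
      Function.update_of_ne h _ _
    have hFt : ∀ e' ∈ E, (∀ k, k ≠ e'.1 → k ≠ e'.2 → ξt e' k = 0) ∧
        ξt e' e'.1 + ξt e' e'.2 = 0 ∧ |ξt e' e'.1| ≤ θ e' := by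
      intro e' he'
      by_cases hee : e' = e
      · subst hee
        refine ⟨fun k hk1 hk2 => ?_, ?_, ?_⟩
        · rw [hξte]; simp [tvVE, hk1, hk2]
        · rw [hξte, hξte]
          have hv1 : tvVE e' e'.1 = 1 := by simp [tvVE, h12]
          have hv2 : tvVE e' e'.2 = -1 := by simp [tvVE, Ne.symm h12]
          rw [hv1, hv2]; ring
        · rw [hξte]
          have hv1 : tvVE e' e'.1 = 1 := by simp [tvVE, h12]
          rw [hv1, mul_one]; exact ht
      · obtain ⟨g0, g1, g2⟩ := hF e' he'
        rw [hξtne e' hee]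
        exact ⟨g0, g1, g2⟩
    have hrep : ∀ k, ξs e k = t₀ * tvVE e k := tv_feas_rep h0 h1
    have hsumt : ∀ k, ∑ e' ∈ E, ξt e' k = (∑ e' ∈ E, ξs e' k) + (t - t₀) * tvVE e k := by
      intro k
      have hA : ξt e k + ∑ e' ∈ E.erase e, ξt e' k = ∑ e' ∈ E, ξt e' k :=
        Finset.add_sum_erase E (fun e' => ξt e' k) he
      have hB : ξs e k + ∑ e' ∈ E.erase e, ξs e' k = ∑ e' ∈ E, ξs e' k :=
        Finset.add_sum_erase E (fun e' => ξs e' k) he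
      have hC : ∑ e' ∈ E.erase e, ξt e' k = ∑ e' ∈ E.erase e, ξs e' k :=
        Finset.sum_congr rfl fun e' he' => by
          rw [hξtne e' (Finset.ne_of_mem_erase he')]
      rw [← hA, hC, hξte k]
      have := hrep k
      linarith [hB]
    have hineq := hopt ξt hFt
    have hΔeq : ∑ k, tvVE e k * β k = Δ := tv_sum_vE_mul e β
    have hv2 : ∑ k, (tvVE e k) ^ 2 = 2 := tv_sum_vE_sq h12
    have hexp : ∑ k, (z k - ∑ e' ∈ E, ξt e' k) ^ 2
        = ∑ k, (β k) ^ 2 - 2 * (t - t₀) * ∑ k, tvVE e k * β k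
          + (t - t₀) ^ 2 * ∑ k, (tvVE e k) ^ 2 := by
      rw [Finset.mul_sum, Finset.mul_sum, ← Finset.sum_sub_distrib, ← Finset.sum_add_distrib]
      refine Finset.sum_congr rfl fun k _ => ?_
      rw [hsumt k]
      have hb : ∑ e' ∈ E, ξs e' k = z k - β k := by simp [hβ]
      rw [hb]; ring
    have hβsq : ∑ k, (z k - ∑ e' ∈ E, ξs e' k) ^ 2 = ∑ k, (β k) ^ 2 :=
      Finset.sum_congr rfl fun k _ => rfl
    rw [hexp, hΔeq, hv2, hβsq] at hineq
    clear_value Δ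
    linarith
  -- conclude complementary slackness from the variational inequality
  show t₀ * Δ = θ e * |Δ|
  have ht₀le : t₀ ≤ θ e := (abs_le.mp ht₀mem).2
  have ht₀ge : -θ e ≤ t₀ := (abs_le.mp ht₀mem).1
  rcases lt_trichotomy Δ 0 with hΔ | hΔ | hΔ
  · -- Δ < 0 : t₀ = -θ e
    have ht : t₀ = -θ e := by
      by_contra hne
      have hlt : -θ e < t₀ := lt_of_le_of_ne ht₀ge (Ne.symm hne)
      set h : ℝ := min (t₀ + θ e) (-Δ / 2) with hh
      have hhpos : 0 < h := lt_min (by linarith) (by linarith)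
      have hth : |t₀ - h| ≤ θ e := by
        rw [abs_le]
        constructor
        · have : h ≤ t₀ + θ e := min_le_left _ _
          linarith
        · linarith
      have := key (t₀ - h) hth
      have hh2 : h ≤ -Δ / 2 := min_le_right _ _
      nlinarith
    rw [ht, abs_of_neg hΔ]; ring
  · rw [hΔ]; simp
  · -- Δ > 0 : t₀ = θ e
    have ht : t₀ = θ e := by
      by_contra hne
      have hlt : t₀ < θ e := lt_of_le_of_ne ht₀le hne
      set h : ℝ := min (θ e - t₀) (Δ / 2) with hh
      have hhpos : 0 < h := lt_min (by linarith) (by linarith)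
      have hth : |t₀ + h| ≤ θ e := by
        rw [abs_le]
        constructor
        · linarith
        · have : h ≤ θ e - t₀ := min_le_left _ _
          linarith
      have := key (t₀ + h) hth
      have hh2 : h ≤ Δ / 2 := min_le_right _ _
      nlinarith
    rw [ht, abs_of_pos hΔ]

private lemma tv_strong_val {d : ℕ} (z : Fin d → ℝ) (E : Finset (Fin d × Fin d))
    (θ : Fin d × Fin d → ℝ) (ξs : (Fin d × Fin d) → Fin d → ℝ)
    (hF : ∀ e ∈ E, (∀ k, k ≠ e.1 → k ≠ e.2 → ξs e k = 0) ∧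
        ξs e e.1 + ξs e e.2 = 0 ∧ |ξs e e.1| ≤ θ e)
    (hopt : ∀ ξ : (Fin d × Fin d) → Fin d → ℝ, (∀ e ∈ E, (∀ k, k ≠ e.1 → k ≠ e.2 → ξ e k = 0) ∧
        ξ e e.1 + ξ e e.2 = 0 ∧ |ξ e e.1| ≤ θ e) →
        (1/2) * ∑ k, (z k - ∑ e ∈ E, ξs e k)^2 ≤ (1/2) * ∑ k, (z k - ∑ e ∈ E, ξ e k)^2) :
    (1/2) * ∑ k, ((z k - ∑ e ∈ E, ξs e k) - z k)^2
      + ∑ e ∈ E, θ e * |(z e.1 - ∑ e' ∈ E, ξs e' e.1) - (z e.2 - ∑ e' ∈ E, ξs e' e.2)|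
    = (1/2) * ∑ k, (z k)^2 - (1/2) * ∑ k, (z k - ∑ e ∈ E, ξs e k)^2 := by
  set β : Fin d → ℝ := fun k => z k - ∑ e' ∈ E, ξs e' k with hβ
  have h1 : ∑ e ∈ E, θ e * |(z e.1 - ∑ e' ∈ E, ξs e' e.1) - (z e.2 - ∑ e' ∈ E, ξs e' e.2)|
      = ∑ k, (∑ e ∈ E, ξs e k) * β k := by
    rw [← tv_pairing E ξs (fun e he => ⟨(hF e he).1, (hF e he).2.1⟩) β]
    exact (Finset.sum_congr rfl fun e he => tv_cs z E θ ξs hF hopt he).symm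
  have h2 : ∀ k, (z k - ∑ e ∈ E, ξs e k) = β k := fun k => rfl
  rw [h1]
  rw [Finset.mul_sum, Finset.mul_sum, Finset.mul_sum, ← Finset.sum_add_distrib,
      ← Finset.sum_sub_distrib]
  refine Finset.sum_congr rfl fun k _ => ?_
  ring

private lemma tv_exists_min {d : ℕ} (z : Fin d → ℝ) (E : Finset (Fin d × Fin d))
    (θ : Fin d × Fin d → ℝ) (hθ : ∀ e ∈ E, 0 ≤ θ e) :
    ∃ ξs : (Fin d × Fin d) → Fin d → ℝ,
      (∀ e ∈ E, (∀ k, k ≠ e.1 → k ≠ e.2 → ξs e k = 0) ∧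
        ξs e e.1 + ξs e e.2 = 0 ∧ |ξs e e.1| ≤ θ e) ∧
      ∀ ξ : (Fin d × Fin d) → Fin d → ℝ, (∀ e ∈ E, (∀ k, k ≠ e.1 → k ≠ e.2 → ξ e k = 0) ∧
        ξ e e.1 + ξ e e.2 = 0 ∧ |ξ e e.1| ≤ θ e) →
        (1/2) * ∑ k, (z k - ∑ e ∈ E, ξs e k)^2 ≤ (1/2) * ∑ k, (z k - ∑ e ∈ E, ξ e k)^2 := by
  set K : Set ((Fin d × Fin d) → ℝ) :=
    Set.univ.pi (fun e => if e ∈ E then Set.Icc (-θ e) (θ e) else {0}) with hK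
  have hKc : IsCompact K := by
    apply isCompact_univ_pi
    intro e
    by_cases he : e ∈ E
    · simp only [he, if_pos]; exact isCompact_Icc
    · simp only [he, if_neg, ite_false]; exact isCompact_singleton
  have hKne : K.Nonempty := by
    refine ⟨fun _ => 0, ?_⟩
    intro e _
    by_cases he : e ∈ E
    · simp only [he, if_pos]
      exact ⟨neg_nonpos.mpr (hθ e he), hθ e he⟩
    · simp [he]
  set F : ((Fin d × Fin d) → ℝ) → ℝ :=
    fun t => (1/2) * ∑ k, (z k - ∑ e ∈ E, t e * tvVE e k)^2 with hFdef
  have hFc : Continuous F := by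
    apply Continuous.mul continuous_const
    apply continuous_finset_sum
    intro k _
    exact ((continuous_const.sub (continuous_finset_sum _ fun e _ =>
      (continuous_apply e).mul continuous_const)).pow 2)
  obtain ⟨t₀, ht₀K, ht₀min⟩ := hKc.exists_isMinOn hKne hFc.continuousOn
  refine ⟨fun e k => t₀ e * tvVE e k, ?_, ?_⟩
  · intro e he
    have hte : t₀ e ∈ Set.Icc (-θ e) (θ e) := by
      have := ht₀K e (Set.mem_univ e)
      simpa [he] using this
    refine ⟨fun k hk1 hk2 => by simp [tvVE, hk1, hk2], ?_, ?_⟩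
    · show t₀ e * tvVE e e.1 + t₀ e * tvVE e e.2 = 0
      by_cases h12 : e.1 = e.2
      · have hv : tvVE e e.2 = 0 := by simp [tvVE, h12]
        rw [show e.1 = e.2 from h12, hv]; ring
      · have hv1 : tvVE e e.1 = 1 := by simp [tvVE, h12]
        have hv2 : tvVE e e.2 = -1 := by simp [tvVE, Ne.symm h12]
        rw [hv1, hv2]; ring
    · show |t₀ e * tvVE e e.1| ≤ θ e
      by_cases h12 : e.1 = e.2
      · have hv : tvVE e e.1 = 0 := by
          have : tvVE e e.2 = 0 := by simp [tvVE, h12]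
          rw [show e.1 = e.2 from h12]; exact this
        rw [hv, mul_zero, abs_zero]; exact hθ e he
      · have hv1 : tvVE e e.1 = 1 := by simp [tvVE, h12]
        rw [hv1, mul_one, abs_le]; exact hte
  · intro ξ hξ
    set t : (Fin d × Fin d) → ℝ := fun e => if e ∈ E then ξ e e.1 else 0 with htdef
    have htK : t ∈ K := by
      intro e _
      by_cases he : e ∈ E
      · simp only [he, if_pos, htdef]
        exact abs_le.mp (hξ e he).2.2
      · simp [he, htdef]
    have hmin := ht₀min htK
    have hDξ : (1/2) * ∑ k, (z k - ∑ e ∈ E, ξ e k)^2 = F t := by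
      simp only [hFdef]
      congr 1
      refine Finset.sum_congr rfl fun k _ => ?_
      congr 1
      congr 1
      refine Finset.sum_congr rfl fun e he => ?_
      rw [tv_feas_rep (hξ e he).1 (hξ e he).2.1 k]
      simp [htdef, he]
    have hDξs : (1/2) * ∑ k, (z k - ∑ e ∈ E, (fun e k => t₀ e * tvVE e k) e k)^2 = F t₀ := rfl
    rw [hDξs, hDξ]
    exact hmin

open Finset in
/-- Strong duality between the TV problem and its flow dual: the optimal value of
`min_β (1/2)‖β − z‖² + Σ_{(i,j)∈E} θ_{ij}|β_i − β_j|` equals `(1/2)‖z‖²` minus the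
optimal value of `min_ξ (1/2)‖z − Σ ξ^{ij}‖²` over feasible edge flows (supported on
`{i,j}`, antisymmetric, capacity-bounded); and any dual optimal `ξ*` recovers a
primal optimal `β = z − Σ ξ^{ij,*}`. -/
theorem stmt_9 (d : ℕ) (hd : 1 ≤ d) (z : Fin d → ℝ) (E : Finset (Fin d × Fin d))
    (θ : Fin d × Fin d → ℝ) (hθ : ∀ e ∈ E, 0 ≤ θ e) :
    let Feas : ((Fin d × Fin d) → Fin d → ℝ) → Prop := fun ξ =>
      ∀ e ∈ E, (∀ k, k ≠ e.1 → k ≠ e.2 → ξ e k = 0) ∧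
        ξ e e.1 + ξ e e.2 = 0 ∧ |ξ e e.1| ≤ θ e
    let P : (Fin d → ℝ) → ℝ := fun β =>
      (1/2) * ∑ k, (β k - z k)^2 + ∑ e ∈ E, θ e * |β e.1 - β e.2|
    let D : ((Fin d × Fin d) → Fin d → ℝ) → ℝ := fun ξ =>
      (1/2) * ∑ k, (z k - ∑ e ∈ E, ξ e k)^2
    (sInf {v : ℝ | ∃ β : Fin d → ℝ, v = P β}
      = (1/2) * ∑ k, (z k)^2 - sInf {v : ℝ | ∃ ξ, Feas ξ ∧ v = D ξ}) ∧
    (∀ ξs, Feas ξs → (∀ ξ, Feas ξ → D ξs ≤ D ξ) →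
      ∀ β : Fin d → ℝ, P (fun k => z k - ∑ e ∈ E, ξs e k) ≤ P β) := by
  intro Feas P D
  obtain ⟨ξs, hFs, hopts⟩ := tv_exists_min z E θ hθ
  have hweak : ∀ ξ, Feas ξ → ∀ β, (1/2) * ∑ k, (z k)^2 - D ξ ≤ P β :=
    fun ξ hξ β => tv_weak z E θ ξ hξ β
  have hstrong : ∀ ξ', Feas ξ' → (∀ ξ, Feas ξ → D ξ' ≤ D ξ) →
      P (fun k => z k - ∑ e ∈ E, ξ' e k) = (1/2) * ∑ k, (z k)^2 - D ξ' :=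
    fun ξ' h1 h2 => tv_strong_val z E θ ξ' h1 h2
  have hpart2 : ∀ ξ', Feas ξ' → (∀ ξ, Feas ξ → D ξ' ≤ D ξ) →
      ∀ β : Fin d → ℝ, P (fun k => z k - ∑ e ∈ E, ξ' e k) ≤ P β := by
    intro ξ' h1 h2 β
    rw [hstrong ξ' h1 h2]
    exact hweak ξ' h1 β
  refine ⟨?_, hpart2⟩
  set β₀ : Fin d → ℝ := fun k => z k - ∑ e ∈ E, ξs e k with hβ₀
  have hprimal : sInf {v : ℝ | ∃ β : Fin d → ℝ, v = P β} = P β₀ := by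
    apply le_antisymm
    · refine csInf_le ⟨(1/2) * ∑ k, (z k)^2 - D ξs, ?_⟩ ⟨β₀, rfl⟩
      rintro v ⟨β, rfl⟩
      exact hweak ξs hFs β
    · refine le_csInf ⟨P β₀, β₀, rfl⟩ ?_
      rintro v ⟨β, rfl⟩
      exact hpart2 ξs hFs hopts β
  have hdual : sInf {v : ℝ | ∃ ξ, Feas ξ ∧ v = D ξ} = D ξs := by
    apply le_antisymm
    · refine csInf_le ⟨0, ?_⟩ ⟨ξs, hFs, rfl⟩
      rintro v ⟨ξ, hξ, rfl⟩
      have : (0:ℝ) ≤ (1/2) * ∑ k, (z k - ∑ e ∈ E, ξ e k)^2 := by positivity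
      exact this
    · refine le_csInf ⟨D ξs, ξs, hFs, rfl⟩ ?_
      rintro v ⟨ξ, hξ, rfl⟩
      exact hopts ξ hξ
  rw [hprimal, hdual]
  exact hstrong ξs hFs hopts
end

section
/- Optimality relation between TV primal and its flow dual: if ξ* = (ξ^{ij,*}) minimizes ‖z − Σ_{(i,j)∈E} ξ^{ij}‖² over the feasible set {ξ^{ij}_k = 0 for k∉{i,j}, ξ^{ij}_i + ξ^{ij}_j = 0, |ξ^{ij}_i| ≤ θ_{ij}}, then β* := z − Σ_{(i,j)∈E} ξ^{ij,*} minimizes β ↦ (1/2)‖β − z‖² + Σ_{(i,j)∈E} θ_{ij}|β_i − β_j|. -/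
/-!
Write `β* = z − Σ_e ξ*_e`. Moving the flow on one edge `e = (i, j)` by `c (𝟙_i − 𝟙_j)` changes
`‖β*‖²` by `−2c (β*_i − β*_j) + 2c²`, so optimality of `ξ*` gives, to first order in `c`,
complementary slackness `θ_e |β*_i − β*_j| = ξ*_{e,i} (β*_i − β*_j)`. For every `γ`,
`Σ_e ξ*_{e,i} (γ_i − γ_j) = ⟨z − β*, γ⟩`, and dual feasibility bounds this by `Σ_e θ_e |γ_i − γ_j|`.
Hence the primal objective at `β` is at least `½‖β − z‖² + ⟨z − β*, β⟩`, which exceeds its value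
at `β*` by `½‖β − β*‖²`, and at `β*` the bound is an equality.
-/

open Finset

theorem nonpos_of_forall_mul_le_sq_mul {p q : ℝ} (hq : 0 ≤ q)
    (h : ∀ ε : ℝ, 0 < ε → ε ≤ 1 → ε * p ≤ ε ^ 2 * q) : p ≤ 0 := by
  by_contra! hp
  have hpq : 0 < p + q := by linarith
  have := h (p / (p + q)) (by positivity) ((div_le_one hpq).2 (by linarith))
  field_simp at this
  nlinarith

theorem mul_le_mul_of_forall_mul_le_sq {s θ D : ℝ} (hs : |s| ≤ θ)
    (h : ∀ c, |s + c| ≤ θ → c * D ≤ c ^ 2) : θ * D ≤ s * D := by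
  obtain ⟨hs₁, hs₂⟩ := abs_le.1 hs
  suffices (θ - s) * D ≤ 0 by linarith
  refine nonpos_of_forall_mul_le_sq_mul (sq_nonneg (θ - s)) fun ε hε hε₁ => ?_
  have hc : |s + ε * (θ - s)| ≤ θ := abs_le.2 ⟨by nlinarith, by nlinarith⟩
  calc ε * ((θ - s) * D) = ε * (θ - s) * D := by ring
    _ ≤ (ε * (θ - s)) ^ 2 := h _ hc
    _ = ε ^ 2 * (θ - s) ^ 2 := by ring

theorem mul_abs_le_of_forall_mul_le_sq {s θ D : ℝ} (hs : |s| ≤ θ)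
    (h : ∀ c, |s + c| ≤ θ → c * D ≤ c ^ 2) : θ * |D| ≤ s * D := by
  rcases le_total 0 D with hD | hD
  · rw [abs_of_nonneg hD]
    exact mul_le_mul_of_forall_mul_le_sq hs h
  · rw [abs_of_nonpos hD]
    have := mul_le_mul_of_forall_mul_le_sq (s := -s) (θ := θ) (D := -D) (by rwa [abs_neg])
      fun c hc => by simpa using h (-c) (by rwa [← abs_neg, neg_add, neg_neg])
    linarith

def IsEdgeFlow {ι : Type*} (i j : ι) (f : ι → ℝ) : Prop :=
  (∀ k, k ≠ i → k ≠ j → f k = 0) ∧ f i + f j = 0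

def IsFeasibleEdgeFlow {ι : Type*} (i j : ι) (c : ℝ) (f : ι → ℝ) : Prop :=
  (∀ k, k ≠ i → k ≠ j → f k = 0) ∧ f i + f j = 0 ∧ |f i| ≤ c

/-- The primal candidate `β* = z − Σ_{e ∈ E} ξ_e` of the paper. -/
def flowResidual {ι : Type*} (z : ι → ℝ) (E : Finset (ι × ι)) (ξ : ι × ι → ι → ℝ) : ι → ℝ :=
  fun k => z k - ∑ e ∈ E, ξ e k

section

variable {ι : Type*} {i j : ι} {f g : ι → ℝ}

theorem IsFeasibleEdgeFlow.isEdgeFlow {c : ℝ} (h : IsFeasibleEdgeFlow i j c f) :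
    IsEdgeFlow i j f :=
  ⟨h.1, h.2.1⟩

theorem IsEdgeFlow.add (hf : IsEdgeFlow i j f) (hg : IsEdgeFlow i j g) :
    IsEdgeFlow i j (f + g) :=
  ⟨fun k hi hj => by simp [hf.1 k hi hj, hg.1 k hi hj], by
    simp only [Pi.add_apply]; linarith [hf.2, hg.2]⟩

theorem IsEdgeFlow.smul (hf : IsEdgeFlow i j f) (c : ℝ) : IsEdgeFlow i j (c • f) :=
  ⟨fun k hi hj => by simp [hf.1 k hi hj], by simp [← mul_add, hf.2]⟩

theorem isEdgeFlow_single_sub_single [DecidableEq ι] (hij : i ≠ j) :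
    IsEdgeFlow i j (Pi.single i 1 - Pi.single j 1) :=
  ⟨fun k hi hj => by simp [hi, hj], by simp [hij, hij.symm]⟩

theorem IsFeasibleEdgeFlow.mul_sub_le {c : ℝ} (h : IsFeasibleEdgeFlow i j c f) (γ : ι → ℝ) :
    f i * (γ i - γ j) ≤ c * |γ i - γ j| :=
  calc f i * (γ i - γ j) ≤ |f i| * |γ i - γ j| := by rw [← abs_mul]; exact le_abs_self _
    _ ≤ c * |γ i - γ j| := mul_le_mul_of_nonneg_right h.2.2 (abs_nonneg _)

theorem IsEdgeFlow.sum_mul_eq [Fintype ι] (hf : IsEdgeFlow i j f) (γ : ι → ℝ) :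
    ∑ k, f k * γ k = f i * (γ i - γ j) := by
  by_cases hij : i = j
  · subst hij
    have hfi : f i = 0 := by linarith [hf.2]
    have hf0 : ∀ k, f k = 0 := fun k => by
      by_cases hk : k = i
      · rw [hk, hfi]
      · exact hf.1 k hk hk
    simp [hf0]
  · rw [Fintype.sum_eq_add i j hij fun k hk => by rw [hf.1 k hk.1 hk.2, zero_mul],
      eq_neg_of_add_eq_zero_right hf.2]
    ring

theorem IsEdgeFlow.sum_sub_sq [Fintype ι] (hf : IsEdgeFlow i j f) (w : ι → ℝ) :
    ∑ k, (w k - f k) ^ 2 = ∑ k, w k ^ 2 - 2 * f i * (w i - w j) + 2 * f i ^ 2 := by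
  have hw := hf.sum_mul_eq w
  have hff := hf.sum_mul_eq f
  rw [eq_neg_of_add_eq_zero_right hf.2] at hff
  calc ∑ k, (w k - f k) ^ 2 = ∑ k, w k ^ 2 - 2 * ∑ k, f k * w k + ∑ k, f k * f k := by
        simp only [mul_sum, ← sum_sub_distrib, ← sum_add_distrib]
        exact sum_congr rfl fun k _ => by ring
    _ = _ := by rw [hw, hff]; ring

theorem sum_update_add_apply {κ : Type*} [DecidableEq κ] {E : Finset κ} {e : κ} (he : e ∈ E)
    (ξ : κ → ι → ℝ) (g : ι → ℝ) (k : ι) :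
    ∑ e' ∈ E, Function.update ξ e (ξ e + g) e' k = ∑ e' ∈ E, ξ e' k + g k := by
  have hupd : ∀ e',
      Function.update ξ e (ξ e + g) e' k = ξ e' k + if e' = e then g k else 0 := by
    intro e'
    by_cases h : e' = e <;> simp [h]
  simp only [hupd, sum_add_distrib, sum_ite_eq', if_pos he]

end

section

variable {ι : Type*} [Fintype ι] {E : Finset (ι × ι)} {ξ : ι × ι → ι → ℝ}

theorem sum_mul_sub_eq_sum_flow_mul (hξ : ∀ e ∈ E, IsEdgeFlow e.1 e.2 (ξ e)) (γ : ι → ℝ) :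
    ∑ e ∈ E, ξ e e.1 * (γ e.1 - γ e.2) = ∑ k, (∑ e ∈ E, ξ e k) * γ k := by
  simp_rw [sum_mul]
  rw [sum_comm]
  exact sum_congr rfl fun e he => ((hξ e he).sum_mul_eq γ).symm

theorem mul_abs_flowResidual_le_of_isMin [DecidableEq ι] {z : ι → ℝ} {θ : ι × ι → ℝ}
    (hfeas : ∀ e ∈ E, IsFeasibleEdgeFlow e.1 e.2 (θ e) (ξ e))
    (hmin : ∀ ξ' : ι × ι → ι → ℝ, (∀ e ∈ E, IsFeasibleEdgeFlow e.1 e.2 (θ e) (ξ' e)) →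
      ∑ k, flowResidual z E ξ k ^ 2 ≤ ∑ k, flowResidual z E ξ' k ^ 2)
    {e : ι × ι} (he : e ∈ E) :
    θ e * |flowResidual z E ξ e.1 - flowResidual z E ξ e.2| ≤
      ξ e e.1 * (flowResidual z E ξ e.1 - flowResidual z E ξ e.2) := by
  set r := flowResidual z E ξ
  by_cases hij : e.1 = e.2
  · simp [hij]
  refine mul_abs_le_of_forall_mul_le_sq (hfeas e he).2.2 fun c hc => ?_
  set v : ι → ℝ := c • (Pi.single e.1 1 - Pi.single e.2 1)
  have hv : IsEdgeFlow e.1 e.2 v := (isEdgeFlow_single_sub_single hij).smul c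
  have hvi : v e.1 = c := by simp [v, hij]
  have hfeas' : ∀ e' ∈ E,
      IsFeasibleEdgeFlow e'.1 e'.2 (θ e') (Function.update ξ e (ξ e + v) e') := by
    intro e' he'
    by_cases h : e' = e
    · rw [h, Function.update_self]
      have hsum := (hfeas e he).isEdgeFlow.add hv
      exact ⟨hsum.1, hsum.2, by rwa [Pi.add_apply, hvi]⟩
    · simpa [h] using hfeas e' he'
  have hres : flowResidual z E (Function.update ξ e (ξ e + v)) = fun k => r k - v k := by
    funext k
    simp only [flowResidual, sum_update_add_apply he, r]
    ring
  have := hmin _ hfeas'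
  rw [hres, hv.sum_sub_sq, hvi] at this
  linarith

end

open Finset in
theorem stmt_10_general (d : ℕ) (z : Fin d → ℝ) (E : Finset (Fin d × Fin d))
    (θ : Fin d × Fin d → ℝ)
    (ξs : (Fin d × Fin d) → Fin d → ℝ)
    (hfeas : ∀ e ∈ E, (∀ k, k ≠ e.1 → k ≠ e.2 → ξs e k = 0) ∧
      ξs e e.1 + ξs e e.2 = 0 ∧ |ξs e e.1| ≤ θ e)
    (hmin : ∀ ξ : (Fin d × Fin d) → Fin d → ℝ,
      (∀ e ∈ E, (∀ k, k ≠ e.1 → k ≠ e.2 → ξ e k = 0) ∧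
        ξ e e.1 + ξ e e.2 = 0 ∧ |ξ e e.1| ≤ θ e) →
      ∑ k, (z k - ∑ e ∈ E, ξs e k)^2 ≤ ∑ k, (z k - ∑ e ∈ E, ξ e k)^2) :
    ∀ β : Fin d → ℝ,
      (1/2) * ∑ k, ((z k - ∑ e ∈ E, ξs e k) - z k)^2
          + ∑ e ∈ E, θ e * |(z e.1 - ∑ e' ∈ E, ξs e' e.1) - (z e.2 - ∑ e' ∈ E, ξs e' e.2)|
        ≤ (1/2) * ∑ k, (β k - z k)^2 + ∑ e ∈ E, θ e * |β e.1 - β e.2| := by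
  intro β
  have hfeas : ∀ e ∈ E, IsFeasibleEdgeFlow e.1 e.2 (θ e) (ξs e) := hfeas
  set r := flowResidual z E ξs
  have hpair : ∀ γ : Fin d → ℝ,
      ∑ e ∈ E, ξs e e.1 * (γ e.1 - γ e.2) = ∑ k, (z k - r k) * γ k := fun γ => by
    simp only [sum_mul_sub_eq_sum_flow_mul (fun e he => (hfeas e he).isEdgeFlow), r,
      flowResidual, sub_sub_cancel]
  calc (1/2) * ∑ k, (r k - z k) ^ 2 + ∑ e ∈ E, θ e * |r e.1 - r e.2|
      ≤ (1/2) * ∑ k, (r k - z k) ^ 2 + ∑ e ∈ E, ξs e e.1 * (r e.1 - r e.2) := by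
        gcongr _ + ∑ e ∈ E, ?_ with e he
        exact mul_abs_flowResidual_le_of_isMin hfeas hmin he
    _ = ∑ k, ((1/2) * (r k - z k) ^ 2 + (z k - r k) * r k) := by
        rw [hpair, mul_sum, ← sum_add_distrib]
    _ ≤ ∑ k, ((1/2) * (β k - z k) ^ 2 + (z k - r k) * β k) :=
        sum_le_sum fun k _ => by nlinarith [sq_nonneg (β k - r k)]
    _ = (1/2) * ∑ k, (β k - z k) ^ 2 + ∑ e ∈ E, ξs e e.1 * (β e.1 - β e.2) := by
        rw [hpair, mul_sum, ← sum_add_distrib]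
    _ ≤ (1/2) * ∑ k, (β k - z k) ^ 2 + ∑ e ∈ E, θ e * |β e.1 - β e.2| := by
        gcongr _ + ∑ e ∈ E, ?_ with e he
        exact (hfeas e he).mul_sub_le β

open Finset in
/-- Recovering the TV primal solution from a dual optimal flow: if `ξ*` minimizes
`‖z − Σ_{(i,j)∈E} ξ^{ij}‖²` over feasible edge flows (supported on `{i,j}`,
antisymmetric, `|ξ^{ij}_i| ≤ θ_{ij}`), then `β* = z − Σ ξ^{ij,*}` minimizes
`β ↦ (1/2)‖β − z‖² + Σ_{(i,j)∈E} θ_{ij}|β_i − β_j|`. -/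
theorem stmt_10 (d : ℕ) (hd : 1 ≤ d) (z : Fin d → ℝ) (E : Finset (Fin d × Fin d))
    (θ : Fin d × Fin d → ℝ) (hθ : ∀ e ∈ E, 0 ≤ θ e)
    (ξs : (Fin d × Fin d) → Fin d → ℝ)
    (hfeas : ∀ e ∈ E, (∀ k, k ≠ e.1 → k ≠ e.2 → ξs e k = 0) ∧
      ξs e e.1 + ξs e e.2 = 0 ∧ |ξs e e.1| ≤ θ e)
    (hmin : ∀ ξ : (Fin d × Fin d) → Fin d → ℝ,
      (∀ e ∈ E, (∀ k, k ≠ e.1 → k ≠ e.2 → ξ e k = 0) ∧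
        ξ e e.1 + ξ e e.2 = 0 ∧ |ξ e e.1| ≤ θ e) →
      ∑ k, (z k - ∑ e ∈ E, ξs e k)^2 ≤ ∑ k, (z k - ∑ e ∈ E, ξ e k)^2) :
    ∀ β : Fin d → ℝ,
      (1/2) * ∑ k, ((z k - ∑ e ∈ E, ξs e k) - z k)^2
          + ∑ e ∈ E, θ e * |(z e.1 - ∑ e' ∈ E, ξs e' e.1) - (z e.2 - ∑ e' ∈ E, ξs e' e.2)|
        ≤ (1/2) * ∑ k, (β k - z k)^2 + ∑ e ∈ E, θ e * |β e.1 - β e.2| :=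
  stmt_10_general d z E θ ξs hfeas hmin
end

section
/- Consequence (Proposition 4, direction 1): any minimizer ξ* of min ‖z − Σ ξ^{ij}‖² over feasible edge flows yields ŝ = Σ ξ^{ij,*} which minimizes ‖z − s‖² over the base polyhedron B(λ f_c) of the cut function; conversely any minimizer s* of the minimum norm point problem admits a feasible edge-flow decomposition s* = Σ ξ̂^{ij} where ξ̂ minimizes the flow objective. -/
open Finset

section Aux

variable {d : ℕ} (E : Finset (Fin d × Fin d)) (θ : Fin d × Fin d → ℝ)

private lemma two_point_sum (g : Fin d → ℝ) (i j : Fin d) (hij : i ≠ j)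
    (h0 : ∀ k, k ≠ i → k ≠ j → g k = 0) (S : Finset (Fin d)) :
    ∑ k ∈ S, g k = (if i ∈ S then g i else 0) + (if j ∈ S then g j else 0) := by
  have hg : ∀ k, g k = (if k = i then g i else 0) + (if k = j then g j else 0) := by
    intro k
    by_cases h1 : k = i
    · subst h1; simp [hij]
    · by_cases h2 : k = j
      · subst h2; simp [h1]
      · simp [h1, h2, h0 k h1 h2]
  calc ∑ k ∈ S, g k
      = ∑ k ∈ S, ((if k = i then g i else 0) + (if k = j then g j else 0)) :=
        Finset.sum_congr rfl fun k _ => hg k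
    _ = _ := by
        rw [Finset.sum_add_distrib, Finset.sum_ite_eq' S i (fun _ => g i),
          Finset.sum_ite_eq' S j (fun _ => g j)]

private lemma edge_cut_bound (ξ : (Fin d × Fin d) → Fin d → ℝ) (e : Fin d × Fin d)
    (h0 : ∀ k, k ≠ e.1 → k ≠ e.2 → ξ e k = 0) (h1 : ξ e e.1 + ξ e e.2 = 0)
    (h2 : |ξ e e.1| ≤ θ e) (S : Finset (Fin d)) :
    ∑ k ∈ S, ξ e k ≤ if (e.1 ∈ S ∧ e.2 ∉ S) ∨ (e.2 ∈ S ∧ e.1 ∉ S) then θ e else 0 := by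
  by_cases hd12 : e.1 = e.2
  · have hz : ξ e e.1 = 0 := by rw [← hd12] at h1; linarith
    have hall : ∀ k, ξ e k = 0 := by
      intro k; by_cases hk : k = e.1
      · rw [hk]; exact hz
      · exact h0 k hk (by rw [← hd12]; exact hk)
    rw [Finset.sum_congr rfl fun k _ => hall k]
    simp [hd12]
  · rw [two_point_sum (ξ e) e.1 e.2 hd12 h0 S]
    have ha : ξ e e.1 ≤ θ e := le_trans (le_abs_self _) h2
    have hb : ξ e e.2 ≤ θ e := by
      have hx : ξ e e.2 = -ξ e e.1 := by linarith
      rw [hx]; exact le_trans (neg_le_abs _) h2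
    by_cases m1 : e.1 ∈ S <;> by_cases m2 : e.2 ∈ S <;> simp [m1, m2] <;> linarith

private lemma edge_total (ξ : (Fin d × Fin d) → Fin d → ℝ) (e : Fin d × Fin d)
    (h0 : ∀ k, k ≠ e.1 → k ≠ e.2 → ξ e k = 0) (h1 : ξ e e.1 + ξ e e.2 = 0) :
    ∑ k, ξ e k = 0 := by
  by_cases hd12 : e.1 = e.2
  · have hz : ξ e e.1 = 0 := by rw [← hd12] at h1; linarith
    apply Finset.sum_eq_zero
    intro k _
    by_cases hk : k = e.1
    · rw [hk]; exact hz
    · exact h0 k hk (by rw [← hd12]; exact hk)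
  · rw [two_point_sum (ξ e) e.1 e.2 hd12 h0 Finset.univ]
    simpa using h1

private lemma flow_mem_B (ξ : (Fin d × Fin d) → Fin d → ℝ)
    (hF : ∀ e ∈ E, (∀ k, k ≠ e.1 → k ≠ e.2 → ξ e k = 0) ∧ ξ e e.1 + ξ e e.2 = 0 ∧
      |ξ e e.1| ≤ θ e) :
    (∀ S : Finset (Fin d), ∑ k ∈ S, ∑ e ∈ E, ξ e k ≤
       ∑ e ∈ E.filter (fun e => (e.1 ∈ S ∧ e.2 ∉ S) ∨ (e.2 ∈ S ∧ e.1 ∉ S)), θ e) ∧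
    ∑ k, ∑ e ∈ E, ξ e k = 0 := by
  constructor
  · intro S
    rw [Finset.sum_comm]
    calc ∑ e ∈ E, ∑ k ∈ S, ξ e k
        ≤ ∑ e ∈ E, if (e.1 ∈ S ∧ e.2 ∉ S) ∨ (e.2 ∈ S ∧ e.1 ∉ S) then θ e else 0 :=
          Finset.sum_le_sum fun e he =>
            edge_cut_bound θ ξ e (hF e he).1 (hF e he).2.1 (hF e he).2.2 S
      _ = _ := (Finset.sum_filter _ _).symm
  · rw [Finset.sum_comm]
    exact Finset.sum_eq_zero fun e he => edge_total ξ e (hF e he).1 (hF e he).2.1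

end Aux
section Aux2

variable {d : ℕ} (E : Finset (Fin d × Fin d)) (θ : Fin d × Fin d → ℝ)

private lemma lovasz (hd : 1 ≤ d) (hθ : ∀ e ∈ E, 0 ≤ θ e) (s : Fin d → ℝ)
    (hs1 : ∀ S : Finset (Fin d), ∑ k ∈ S, s k ≤
      ∑ e ∈ E.filter (fun e => (e.1 ∈ S ∧ e.2 ∉ S) ∨ (e.2 ∈ S ∧ e.1 ∉ S)), θ e)
    (hs2 : ∑ k, s k = 0) (w : Fin d → ℝ) :
    ∑ k, w k * s k ≤ ∑ e ∈ E, θ e * |w e.1 - w e.2| := by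
  have hne : (Finset.univ : Finset (Fin d)).Nonempty := ⟨⟨0, hd⟩, Finset.mem_univ _⟩
  suffices h : ∀ n (w : Fin d → ℝ), (Finset.image w Finset.univ).card ≤ n →
      ∑ k, w k * s k ≤ ∑ e ∈ E, θ e * |w e.1 - w e.2| from h _ w le_rfl
  intro n
  induction n with
  | zero =>
    intro w hw
    exact absurd hw (by
      simp only [not_le]
      exact Finset.card_pos.mpr (hne.image w))
  | succ n ih =>
    intro w hw
    by_cases hc : (Finset.image w Finset.univ).card ≤ 1
    · obtain ⟨k0, _⟩ := hne
      have hcst : ∀ k, w k = w k0 := fun k =>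
        Finset.card_le_one.mp hc _ (Finset.mem_image_of_mem w (Finset.mem_univ k)) _
          (Finset.mem_image_of_mem w (Finset.mem_univ k0))
      calc ∑ k, w k * s k = w k0 * ∑ k, s k := by
            rw [Finset.mul_sum]; exact Finset.sum_congr rfl fun k _ => by rw [hcst k]
        _ = 0 := by rw [hs2, mul_zero]
        _ ≤ _ := Finset.sum_nonneg fun e he => mul_nonneg (hθ e he) (abs_nonneg _)
    · push_neg at hc
      set I := Finset.image w Finset.univ with hI
      have hIne : I.Nonempty := hne.image w
      set M := I.max' hIne with hMdef
      have hMI : M ∈ I := I.max'_mem hIne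
      have hEr : (I.erase M).Nonempty := by
        rw [← Finset.card_pos, Finset.card_erase_of_mem hMI]; omega
      set m := (I.erase M).max' hEr with hmdef
      have hmI : m ∈ I.erase M := (I.erase M).max'_mem hEr
      have hmM : m < M :=
        lt_of_le_of_ne (I.le_max' m (Finset.mem_erase.mp hmI).2) (Finset.mem_erase.mp hmI).1
      have hle : ∀ k, w k ≠ M → w k ≤ m := fun k hk =>
        (I.erase M).le_max' _
          (Finset.mem_erase.mpr ⟨hk, Finset.mem_image_of_mem w (Finset.mem_univ k)⟩)
      set w' : Fin d → ℝ := fun k => if w k = M then m else w k with hw'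
      have hcard : (Finset.image w' Finset.univ).card ≤ n := by
        have hsub : Finset.image w' Finset.univ ⊆ I.erase M := by
          intro x hx
          obtain ⟨k, _, rfl⟩ := Finset.mem_image.mp hx
          by_cases h : w k = M
          · simpa [hw', h] using hmI
          · have : w' k = w k := by simp [hw', h]
            rw [this]
            exact Finset.mem_erase.mpr ⟨h, Finset.mem_image_of_mem w (Finset.mem_univ k)⟩
        have := Finset.card_le_card hsub
        rw [Finset.card_erase_of_mem hMI] at this
        omega
      set S : Finset (Fin d) := Finset.univ.filter (fun k => w k = M) with hS
      have key1 : ∑ k, w k * s k = ∑ k, w' k * s k + (M - m) * ∑ k ∈ S, s k := by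
        have hpt : ∀ k, w k * s k = w' k * s k + (if w k = M then (M - m) * s k else 0) := by
          intro k; by_cases h : w k = M <;> simp [hw', h] <;> ring
        rw [Finset.sum_congr rfl fun k _ => hpt k, Finset.sum_add_distrib, Finset.mul_sum, hS,
          Finset.sum_filter]
      have key2 : ∀ e ∈ E, |w e.1 - w e.2| = |w' e.1 - w' e.2| +
          (if (e.1 ∈ S ∧ e.2 ∉ S) ∨ (e.2 ∈ S ∧ e.1 ∉ S) then (M - m) else 0) := by
        intro e _
        have hS1 : e.1 ∈ S ↔ w e.1 = M := by simp [hS]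
        have hS2 : e.2 ∈ S ↔ w e.2 = M := by simp [hS]
        by_cases h1 : w e.1 = M <;> by_cases h2 : w e.2 = M
        · simp [hw', h1, h2, hS1, hS2]
        · have hb : w e.2 ≤ m := hle _ h2
          simp only [hw', h1, h2, if_true, if_false]
          rw [if_pos (Or.inl ⟨hS1.mpr h1, fun hcc => h2 (hS2.mp hcc)⟩),
            abs_of_nonneg (by linarith : (0:ℝ) ≤ M - w e.2),
            abs_of_nonneg (by linarith : (0:ℝ) ≤ m - w e.2)]
          ring
        · have hb : w e.1 ≤ m := hle _ h1
          simp only [hw', h1, h2, if_true, if_false]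
          rw [if_pos (Or.inr ⟨hS2.mpr h2, fun hcc => h1 (hS1.mp hcc)⟩),
            abs_of_nonpos (by linarith : w e.1 - M ≤ 0),
            abs_of_nonpos (by linarith : w e.1 - m ≤ 0)]
          ring
        · simp [hw', h1, h2, hS1, hS2]
      have key3 : ∑ e ∈ E, θ e * |w e.1 - w e.2|
          = ∑ e ∈ E, θ e * |w' e.1 - w' e.2| + (M - m) *
            ∑ e ∈ E.filter (fun e => (e.1 ∈ S ∧ e.2 ∉ S) ∨ (e.2 ∈ S ∧ e.1 ∉ S)), θ e := by
        have hpt : ∀ e ∈ E, θ e * |w e.1 - w e.2| = θ e * |w' e.1 - w' e.2| +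
            (if (e.1 ∈ S ∧ e.2 ∉ S) ∨ (e.2 ∈ S ∧ e.1 ∉ S) then (M - m) * θ e else 0) := by
          intro e he
          rw [key2 e he, mul_add]
          congr 1
          by_cases hcc : (e.1 ∈ S ∧ e.2 ∉ S) ∨ (e.2 ∈ S ∧ e.1 ∉ S) <;> simp [hcc] <;> ring
        rw [Finset.sum_congr rfl hpt, Finset.sum_add_distrib, Finset.mul_sum,
          Finset.sum_filter]
      calc ∑ k, w k * s k = ∑ k, w' k * s k + (M - m) * ∑ k ∈ S, s k := key1
        _ ≤ ∑ e ∈ E, θ e * |w' e.1 - w' e.2| + (M - m) *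
            ∑ e ∈ E.filter (fun e => (e.1 ∈ S ∧ e.2 ∉ S) ∨ (e.2 ∈ S ∧ e.1 ∉ S)), θ e :=
          add_le_add (ih w' hcard) (mul_le_mul_of_nonneg_left (hs1 S) (by linarith))
        _ = _ := key3.symm

end Aux2
section Aux3

variable {d : ℕ} (E : Finset (Fin d × Fin d)) (θ : Fin d × Fin d → ℝ)

private lemma exists_extreme_flow (hθ : ∀ e ∈ E, 0 ≤ θ e) (w : Fin d → ℝ) :
    ∃ ξ : (Fin d × Fin d) → Fin d → ℝ,
      (∀ e ∈ E, (∀ k, k ≠ e.1 → k ≠ e.2 → ξ e k = 0) ∧ ξ e e.1 + ξ e e.2 = 0 ∧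
        |ξ e e.1| ≤ θ e) ∧
      (∀ e ∉ E, ∀ k, ξ e k = 0) ∧
      ∑ k, w k * (∑ e ∈ E, ξ e k) = ∑ e ∈ E, θ e * |w e.1 - w e.2| := by
  classical
  set a : Fin d × Fin d → ℝ := fun e => if w e.2 ≤ w e.1 then θ e else -θ e with ha
  refine ⟨fun e k => if e ∈ E ∧ e.1 ≠ e.2 then
      (if k = e.1 then a e else if k = e.2 then -a e else 0) else 0, ?_, ?_, ?_⟩
  · intro e he
    by_cases hd12 : e.1 = e.2
    · refine ⟨?_, ?_, ?_⟩ <;> simp [hd12, hθ e he]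
    · refine ⟨fun k h1 h2 => by simp [he, hd12, h1, h2], ?_, ?_⟩
      · simp [he, hd12, Ne.symm hd12]
      · have hae : |a e| = θ e := by
          rw [ha]
          by_cases hcmp : w e.2 ≤ w e.1 <;>
            simp [hcmp, abs_of_nonneg (hθ e he), abs_of_nonpos (neg_nonpos.mpr (hθ e he))]
        simp [he, hd12, hae]
  · intro e he k
    simp [he]
  · rw [Finset.sum_congr rfl fun k (_ : k ∈ Finset.univ) =>
      (Finset.mul_sum E (fun e => if e ∈ E ∧ e.1 ≠ e.2 then
        (if k = e.1 then a e else if k = e.2 then -a e else 0) else 0) (w k)),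
      Finset.sum_comm]
    apply Finset.sum_congr rfl
    intro e he
    by_cases hd12 : e.1 = e.2
    · simp [hd12, sub_self]
    · have hpt : ∀ k, w k * (if e ∈ E ∧ e.1 ≠ e.2 then
          (if k = e.1 then a e else if k = e.2 then -a e else 0) else 0)
          = (if k = e.1 then w e.1 * a e else 0) + (if k = e.2 then w e.2 * (-a e) else 0) := by
        intro k
        simp only [he, hd12, ne_eq, not_false_eq_true, and_self, if_true]
        by_cases h1 : k = e.1
        · subst h1; simp [hd12]
        · by_cases h2 : k = e.2
          · subst h2; simp [h1]
          · simp [h1, h2]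
      rw [Finset.sum_congr rfl fun k _ => hpt k, Finset.sum_add_distrib,
        Finset.sum_ite_eq' Finset.univ e.1 (fun _ => w e.1 * a e),
        Finset.sum_ite_eq' Finset.univ e.2 (fun _ => w e.2 * (-a e))]
      simp only [Finset.mem_univ, if_true]
      rw [ha]
      by_cases hcmp : w e.2 ≤ w e.1
      · simp only [hcmp, if_true]
        rw [abs_of_nonneg (by linarith)]
        ring
      · simp only [hcmp, if_false]
        rw [abs_of_nonpos (by linarith)]
        ring

end Aux3
section Aux4

variable {d : ℕ}

private lemma mem_B_decomp (E : Finset (Fin d × Fin d)) (θ : Fin d × Fin d → ℝ)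
    (hd : 1 ≤ d) (hθ : ∀ e ∈ E, 0 ≤ θ e) (s : Fin d → ℝ)
    (hs1 : ∀ S : Finset (Fin d), ∑ k ∈ S, s k ≤
      ∑ e ∈ E.filter (fun e => (e.1 ∈ S ∧ e.2 ∉ S) ∨ (e.2 ∈ S ∧ e.1 ∉ S)), θ e)
    (hs2 : ∑ k, s k = 0)
    (lovasz : ∀ w : Fin d → ℝ, ∑ k, w k * s k ≤ ∑ e ∈ E, θ e * |w e.1 - w e.2|)
    (extreme : ∀ w : Fin d → ℝ, ∃ ξ : (Fin d × Fin d) → Fin d → ℝ,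
      (∀ e ∈ E, (∀ k, k ≠ e.1 → k ≠ e.2 → ξ e k = 0) ∧ ξ e e.1 + ξ e e.2 = 0 ∧
        |ξ e e.1| ≤ θ e) ∧
      (∀ e ∉ E, ∀ k, ξ e k = 0) ∧
      ∑ k, w k * (∑ e ∈ E, ξ e k) = ∑ e ∈ E, θ e * |w e.1 - w e.2|) :
    ∃ ξ : (Fin d × Fin d) → Fin d → ℝ,
      (∀ e ∈ E, (∀ k, k ≠ e.1 → k ≠ e.2 → ξ e k = 0) ∧ ξ e e.1 + ξ e e.2 = 0 ∧
        |ξ e e.1| ≤ θ e) ∧ ∀ k, s k = ∑ e ∈ E, ξ e k := by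
  classical
  set L : ((Fin d × Fin d) → Fin d → ℝ) →ₗ[ℝ] (Fin d → ℝ) :=
    { toFun := fun ξ k => ∑ e ∈ E, ξ e k
      map_add' := fun x y => by funext k; simp [Finset.sum_add_distrib]
      map_smul' := fun c x => by funext k; simp [Finset.mul_sum] } with hL
  set K : Set ((Fin d × Fin d) → Fin d → ℝ) :=
    {ξ | (∀ e ∈ E, (∀ k, k ≠ e.1 → k ≠ e.2 → ξ e k = 0) ∧ ξ e e.1 + ξ e e.2 = 0 ∧
      |ξ e e.1| ≤ θ e) ∧ ∀ e ∉ E, ∀ k, ξ e k = 0} with hK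
  suffices hsF : s ∈ L '' K by
    obtain ⟨ξ, hξK, hξs⟩ := hsF
    exact ⟨ξ, hξK.1, fun k => by rw [← hξs]; rfl⟩
  by_contra hns
  have hc : ∀ (e : Fin d × Fin d) (k : Fin d),
      Continuous fun ξ : (Fin d × Fin d) → Fin d → ℝ => ξ e k :=
    fun e k => (continuous_apply k).comp (continuous_apply e)
  have hKeq : K = (⋂ (e) (_ : e ∈ E) (k) (_ : k ≠ e.1) (_ : k ≠ e.2),
        {ξ : (Fin d × Fin d) → Fin d → ℝ | ξ e k = 0})
      ∩ ((⋂ (e) (_ : e ∈ E), {ξ : (Fin d × Fin d) → Fin d → ℝ | ξ e e.1 + ξ e e.2 = 0})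
      ∩ ((⋂ (e) (_ : e ∈ E), {ξ : (Fin d × Fin d) → Fin d → ℝ | |ξ e e.1| ≤ θ e})
      ∩ (⋂ (e) (_ : e ∉ E) (k), {ξ : (Fin d × Fin d) → Fin d → ℝ | ξ e k = 0}))) := by
    ext ξ
    simp only [hK, Set.mem_setOf_eq, Set.mem_inter_iff, Set.mem_iInter]
    constructor
    · rintro ⟨h1, h2⟩
      exact ⟨fun e he k hk1 hk2 => (h1 e he).1 k hk1 hk2,
        fun e he => (h1 e he).2.1, fun e he => (h1 e he).2.2, h2⟩
    · rintro ⟨h1, h2, h3, h4⟩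
      exact ⟨fun e he => ⟨h1 e he, h2 e he, h3 e he⟩, h4⟩
  have hKclosed : IsClosed K := by
    rw [hKeq]
    refine IsClosed.inter ?_ (IsClosed.inter ?_ (IsClosed.inter ?_ ?_))
    · exact isClosed_iInter fun e => isClosed_iInter fun _ => isClosed_iInter fun k =>
        isClosed_iInter fun _ => isClosed_iInter fun _ => isClosed_eq (hc e k) continuous_const
    · exact isClosed_iInter fun e => isClosed_iInter fun _ =>
        isClosed_eq ((hc e e.1).add (hc e e.2)) continuous_const
    · exact isClosed_iInter fun e => isClosed_iInter fun _ =>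
        isClosed_le (hc e e.1).abs continuous_const
    · exact isClosed_iInter fun e => isClosed_iInter fun _ => isClosed_iInter fun k =>
        isClosed_eq (hc e k) continuous_const
  have hKT : K ⊆ Set.univ.pi fun e => Set.univ.pi fun k =>
      Set.Icc (-(max (θ e) 0)) (max (θ e) 0) := by
    intro ξ hξ
    simp only [Set.mem_univ_pi, Set.mem_Icc]
    intro e k
    by_cases he : e ∈ E
    · obtain ⟨h0, h1, h2⟩ := hξ.1 e he
      have habs : |ξ e k| ≤ max (θ e) 0 := by
        by_cases hk1 : k = e.1
        · rw [hk1]; exact le_trans h2 (le_max_left _ _)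
        · by_cases hk2 : k = e.2
          · rw [hk2]
            have : ξ e e.2 = -ξ e e.1 := by linarith
            rw [this, abs_neg]; exact le_trans h2 (le_max_left _ _)
          · rw [h0 k hk1 hk2, abs_zero]; exact le_max_right _ _
      exact abs_le.mp habs
    · rw [hξ.2 e he k]
      constructor <;> simp [le_max_right]
  have hT : IsCompact (Set.univ.pi fun e : Fin d × Fin d => Set.univ.pi fun k : Fin d =>
      Set.Icc (-(max (θ e) 0)) (max (θ e) 0)) :=
    isCompact_univ_pi fun e => isCompact_univ_pi fun k => isCompact_Icc
  have hKcomp : IsCompact K := hT.of_isClosed_subset hKclosed hKT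
  have hKconv : Convex ℝ K := by
    intro x hx y hy a b ha hb hab
    constructor
    · intro e he
      obtain ⟨hx0, hx1, hx2⟩ := hx.1 e he
      obtain ⟨hy0, hy1, hy2⟩ := hy.1 e he
      refine ⟨fun k h1 h2 => ?_, ?_, ?_⟩
      · simp [hx0 k h1 h2, hy0 k h1 h2]
      · simp only [Pi.add_apply, Pi.smul_apply, smul_eq_mul]
        linear_combination a * hx1 + b * hy1
      · simp only [Pi.add_apply, Pi.smul_apply, smul_eq_mul]
        calc |a * x e e.1 + b * y e e.1| ≤ |a * x e e.1| + |b * y e e.1| := abs_add_le _ _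
          _ = a * |x e e.1| + b * |y e e.1| := by
              rw [abs_mul, abs_mul, abs_of_nonneg ha, abs_of_nonneg hb]
          _ ≤ a * θ e + b * θ e :=
              add_le_add (mul_le_mul_of_nonneg_left hx2 ha) (mul_le_mul_of_nonneg_left hy2 hb)
          _ = θ e := by rw [← add_mul, hab, one_mul]
    · intro e he k
      simp [hx.2 e he k, hy.2 e he k]
  have hLcont : Continuous L := by
    show Continuous fun ξ : (Fin d × Fin d) → Fin d → ℝ => fun k => ∑ e ∈ E, ξ e k
    exact continuous_pi fun k => continuous_finset_sum E fun e _ => hc e k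
  have hFconv : Convex ℝ (L '' K) := hKconv.linear_image L
  have hFclosed : IsClosed (L '' K) := (hKcomp.image hLcont).isClosed
  obtain ⟨f, u, hfu, hus⟩ := geometric_hahn_banach_closed_point hFconv hFclosed hns
  set w : Fin d → ℝ := fun k => f (fun j => if k = j then 1 else 0) with hwdef
  have hf : ∀ x : Fin d → ℝ, f x = ∑ k, x k * w k := by
    intro x
    conv_lhs => rw [pi_eq_sum_univ x]
    rw [map_sum]
    exact Finset.sum_congr rfl fun k _ => by rw [map_smul, smul_eq_mul, hwdef]
  obtain ⟨ξ, hξF, hξ0, hξval⟩ := extreme w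
  have hξK : ξ ∈ K := ⟨hξF, hξ0⟩
  have h1 : f (L ξ) < u := hfu _ ⟨ξ, hξK, rfl⟩
  have h2 : f (L ξ) = ∑ e ∈ E, θ e * |w e.1 - w e.2| := by
    rw [hf, ← hξval]
    exact Finset.sum_congr rfl fun k _ => mul_comm _ _
  have h3 : f s ≤ ∑ e ∈ E, θ e * |w e.1 - w e.2| := by
    rw [hf]
    calc ∑ k, s k * w k = ∑ k, w k * s k := Finset.sum_congr rfl fun k _ => mul_comm _ _
      _ ≤ _ := lovasz w
  linarith

end Aux4

open Finset in
/-- Proposition 4: the minimum-norm-point problem over the base polyhedron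
`B(f_c)` of the cut function and the minimum quadratic cost flow problem
correspond: (1) any optimal feasible flow `ξ*` yields `ŝ = Σ ξ^{ij,*}` minimizing
`‖z − s‖²` over `B(f_c)`; (2) any minimizer `s*` over `B(f_c)` decomposes as
`s* = Σ ξ̂^{ij}` for some optimal feasible flow `ξ̂`. -/
theorem stmt_12 (d : ℕ) (hd : 1 ≤ d) (z : Fin d → ℝ) (E : Finset (Fin d × Fin d))
    (θ : Fin d × Fin d → ℝ) (hθ : ∀ e ∈ E, 0 ≤ θ e) :
    let fc : Finset (Fin d) → ℝ := fun S =>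
      ∑ e ∈ E.filter (fun e => (e.1 ∈ S ∧ e.2 ∉ S) ∨ (e.2 ∈ S ∧ e.1 ∉ S)), θ e
    let B : Set (Fin d → ℝ) :=
      {s | (∀ S : Finset (Fin d), ∑ k ∈ S, s k ≤ fc S) ∧ ∑ k, s k = 0}
    let Feas : ((Fin d × Fin d) → Fin d → ℝ) → Prop := fun ξ =>
      ∀ e ∈ E, (∀ k, k ≠ e.1 → k ≠ e.2 → ξ e k = 0) ∧
        ξ e e.1 + ξ e e.2 = 0 ∧ |ξ e e.1| ≤ θ e
    (∀ ξs, Feas ξs →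
      (∀ ξ, Feas ξ → ∑ k, (z k - ∑ e ∈ E, ξs e k)^2 ≤ ∑ k, (z k - ∑ e ∈ E, ξ e k)^2) →
      ((fun k => ∑ e ∈ E, ξs e k) ∈ B ∧
        ∀ s ∈ B, ∑ k, (z k - ∑ e ∈ E, ξs e k)^2 ≤ ∑ k, (z k - s k)^2)) ∧
    (∀ s ∈ B, (∀ s' ∈ B, ∑ k, (z k - s k)^2 ≤ ∑ k, (z k - s' k)^2) →
      ∃ ξh, Feas ξh ∧ s = (fun k => ∑ e ∈ E, ξh e k) ∧
        ∀ ξ, Feas ξ → ∑ k, (z k - ∑ e ∈ E, ξh e k)^2 ≤ ∑ k, (z k - ∑ e ∈ E, ξ e k)^2) := by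
  intro fc B Feas
  have decomp : ∀ s ∈ B, ∃ ξ : (Fin d × Fin d) → Fin d → ℝ,
      Feas ξ ∧ ∀ k, s k = ∑ e ∈ E, ξ e k := by
    intro s hs
    exact mem_B_decomp E θ hd hθ s hs.1 hs.2
      (fun w => lovasz E θ hd hθ s hs.1 hs.2 w)
      (fun w => exists_extreme_flow E θ hθ w)
  constructor
  · intro ξs hξs hopt
    have hmem := flow_mem_B E θ ξs hξs
    refine ⟨⟨hmem.1, hmem.2⟩, ?_⟩
    intro s hs
    obtain ⟨ξ, hξF, hξs'⟩ := decomp s hs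
    calc ∑ k, (z k - ∑ e ∈ E, ξs e k)^2 ≤ ∑ k, (z k - ∑ e ∈ E, ξ e k)^2 := hopt ξ hξF
      _ = ∑ k, (z k - s k)^2 := Finset.sum_congr rfl fun k _ => by rw [← hξs' k]
  · intro s hs hopt
    obtain ⟨ξh, hξF, hξs'⟩ := decomp s hs
    refine ⟨ξh, hξF, funext hξs', ?_⟩
    intro ξ hξ
    have hmem := flow_mem_B E θ ξ hξ
    calc ∑ k, (z k - ∑ e ∈ E, ξh e k)^2 = ∑ k, (z k - s k)^2 :=
        Finset.sum_congr rfl fun k _ => by rw [hξs' k]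
      _ ≤ _ := hopt (fun k => ∑ e ∈ E, ξ e k) ⟨hmem.1, hmem.2⟩
end
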